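/- arXiv:1309.7236 — 9 statements merged into one kernel-verified Lean document; each statement's English description precedes it below -/
import Mathlib

section
/- Let L be an order-theoretic lattice equipped with a strictly monotone, additive rank function rk : L → ℕ and a subadditive function logvol : L → ℝ (i.e. logvol(W ⊓ W') + logvol(W ⊔ W') ≤ logvol(W) + logvol(W') for all W, W'). For W distinct from the top and bottom elements, define c_W as the infimum over all W₀ < W < W₂ of slope(W₂,W) − slope(W,W₀), where slope(A,B) = (logvol(A) − logvol(B))/(rk(A) − rk(B)). Then for any two incomparable elements V, W ∈ L, c_W ≤ 0 or c_V ≤ 0. -/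
/-!
Put `m = V ⊓ W` and `M = V ⊔ W`; by incomparability both `W` and `V` lie strictly between them.
By additivity of the rank, `rk M - rk W = rk V - rk m` and `rk M - rk V = rk W - rk m`, so the two
slope differences `slope M W - slope W m` and `slope M V - slope V m` add up to
`(lv M + lv m - lv V - lv W) * (1 / (rk V - rk m) + 1 / (rk W - rk m))` (with `lv = logvol`),
which is `≤ 0` by subadditivity. Hence one of the two slope differences is `≤ 0`, and it bounds
`c W` resp. `c V` from above.
-/

/-- Its denominator vanishes when `rk A = rk B`, where the value is the junk `0`. -/
noncomputable def rankSlope {L : Type*} (rk : L → ℕ) (f : L → ℝ) (A B : L) : ℝ :=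
  (f A - f B) / ((rk A : ℝ) - (rk B : ℝ))

theorem rankSlope_sub_add_rankSlope_sub_nonpos {L : Type*} [Lattice L] {rk : L → ℕ}
    {f : L → ℝ} (hrk : Monotone rk) {V W : L}
    (hadd : rk (V ⊓ W) + rk (V ⊔ W) = rk V + rk W)
    (hsub : f (V ⊓ W) + f (V ⊔ W) ≤ f V + f W) :
    (rankSlope rk f (V ⊔ W) W - rankSlope rk f W (V ⊓ W)) +
      (rankSlope rk f (V ⊔ W) V - rankSlope rk f V (V ⊓ W)) ≤ 0 := by
  have hadd' : (rk (V ⊓ W) : ℝ) + rk (V ⊔ W) = rk V + rk W := by exact_mod_cast hadd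
  have hV : (0 : ℝ) ≤ (rk V : ℝ) - rk (V ⊓ W) := sub_nonneg.2 (by exact_mod_cast hrk inf_le_left)
  have hW : (0 : ℝ) ≤ (rk W : ℝ) - rk (V ⊓ W) := sub_nonneg.2 (by exact_mod_cast hrk inf_le_right)
  calc _ = (f (V ⊔ W) - f W - (f V - f (V ⊓ W))) / ((rk V : ℝ) - rk (V ⊓ W)) +
        (f (V ⊔ W) - f V - (f W - f (V ⊓ W))) / ((rk W : ℝ) - rk (V ⊓ W)) := by
        simp only [rankSlope]
        rw [show (rk (V ⊔ W) : ℝ) - rk W = rk V - rk (V ⊓ W) by linarith,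
          show (rk (V ⊔ W) : ℝ) - rk V = rk W - rk (V ⊓ W) by linarith]
        ring
    _ ≤ 0 := add_nonpos (div_nonpos_of_nonpos_of_nonneg (by linarith) hV)
        (div_nonpos_of_nonpos_of_nonneg (by linarith) hW)

/-- For an order-theoretic lattice `L` with a strictly monotone, additive
rank function and a subadditive `logvol`, any two incomparable elements `V, W` satisfy
`c W ≤ 0 ∨ c V ≤ 0`, where `c` is the infimum of slope differences. -/
theorem canonical_filtration_incomparable {L : Type*} [Lattice L] [BoundedOrder L]
    (rk : L → ℕ) (logvol : L → ℝ)
    (hmono : ∀ W W' : L, W < W' → rk W < rk W')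
    (hadd : ∀ W W' : L, rk (W ⊓ W') + rk (W ⊔ W') = rk W + rk W')
    (hsub : ∀ W W' : L, logvol (W ⊓ W') + logvol (W ⊔ W') ≤ logvol W + logvol W')
    (slope : L → L → ℝ)
    (hslope : ∀ A B : L, slope A B = (logvol A - logvol B) / ((rk A : ℝ) - (rk B : ℝ)))
    (c : L → ℝ)
    (hc : ∀ W : L, W ≠ ⊥ → W ≠ ⊤ →
      c W = sInf {x : ℝ | ∃ W₀ W₂ : L, W₀ < W ∧ W < W₂ ∧ x = slope W₂ W - slope W W₀})
    (V W : L) (hVW : ¬ V ≤ W) (hWV : ¬ W ≤ V) :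
    c W ≤ 0 ∨ c V ≤ 0 := by
  obtain rfl : slope = rankSlope rk logvol := by
    funext A B
    exact hslope A B
  have hc_nonpos : ∀ X, V ⊓ W < X → X < V ⊔ W →
      rankSlope rk logvol (V ⊔ W) X - rankSlope rk logvol X (V ⊓ W) ≤ 0 → c X ≤ 0 :=
    fun X hmX hXM hX => (hc X (ne_bot_of_gt hmX) (ne_top_of_lt hXM)).symm ▸
      Real.sInf_nonpos' ⟨_, ⟨V ⊓ W, V ⊔ W, hmX, hXM, rfl⟩, hX⟩
  have hsum := rankSlope_sub_add_rankSlope_sub_nonpos (StrictMono.monotone hmono)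
    (hadd V W) (hsub V W)
  rcases le_or_gt (rankSlope rk logvol (V ⊔ W) W - rankSlope rk logvol W (V ⊓ W)) 0
    with hWslope | hWslope
  · exact Or.inl (hc_nonpos W (inf_lt_right.2 hWV) (right_lt_sup.2 hVW) hWslope)
  · exact Or.inr (hc_nonpos V (inf_lt_left.2 hVW) (left_lt_sup.2 hWV) (by linarith))
end

section
/- Let L be an order-theoretic lattice with rank function rk and volume function logvol satisfying: rk strictly monotone, rk additive, logvol subadditive. If two elements V, V' of L (both distinct from top and bottom) satisfy c_V > 0 and c_{V'} > 0 and rk(V) = rk(V'), then V = V'. -/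
/-!
If `V ≠ V'` have the same rank, strict monotonicity of the rank makes them incomparable, so
`V ⊓ V' < V, V' < V ⊔ V'`, and additivity of the rank puts `V` and `V'` exactly halfway (in rank)
between `V ⊓ V'` and `V ⊔ V'`. Positivity of `c` at `V` says that the slopes from `V ⊓ V'` to `V`
and from `V` to `V ⊔ V'` strictly increase, i.e. `2 logvol V < logvol (V ⊓ V') + logvol (V ⊔ V')`,
and likewise for `V'`. Adding the two contradicts subadditivity of `logvol`.
-/

theorem StrictMono.eq_of_le_of_apply_eq {α β : Type*} [PartialOrder α] [Preorder β]
    {f : α → β} (hf : StrictMono f) {a b : α} (hab : a ≤ b) (h : f a = f b) : a = b :=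
  hab.eq_or_lt.resolve_right fun hlt => (hf hlt).ne h

-- An unbounded set has `sInf = 0` in `ℝ`, so positivity of `sInf` forces boundedness.
theorem Real.pos_of_mem_of_sInf_pos {S : Set ℝ} {x : ℝ} (hS : 0 < sInf S) (hx : x ∈ S) :
    0 < x := by
  have hbdd : BddBelow S := by
    by_contra h
    rw [Real.sInf_of_not_bddBelow h] at hS
    exact hS.false
  exact hS.trans_le (csInf_le hbdd hx)

theorem slope_lt_slope_of_sInf_pos {L : Type*} [Preorder L] (slope : L → L → ℝ) {A W B : L}
    (hW : 0 < sInf {x : ℝ | ∃ W₀ W₂ : L, W₀ < W ∧ W < W₂ ∧ x = slope W₂ W - slope W W₀})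
    (hAW : A < W) (hWB : W < B) : slope W A < slope B W :=
  sub_pos.mp (Real.pos_of_mem_of_sInf_pos hW ⟨A, B, hAW, hWB, rfl⟩)

theorem two_mul_lt_add_of_div_lt_div {a w b ra rw rb : ℝ} (hr : ra < rw)
    (hsum : ra + rb = 2 * rw) (h : (w - a) / (rw - ra) < (b - w) / (rb - rw)) :
    2 * w < a + b := by
  have hgap : rb - rw = rw - ra := by linarith
  rw [hgap, div_lt_div_iff_of_pos_right (sub_pos.mpr hr)] at h
  linarith

/-- In an order-theoretic lattice with strictly monotone additive rank and
subadditive `logvol`, two elements (distinct from `⊥` and `⊤`) with positive `c`-value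
and the same rank coincide. -/
theorem canonical_filtration_unique {L : Type*} [Lattice L] [BoundedOrder L]
    (rk : L → ℕ) (logvol : L → ℝ)
    (hmono : ∀ W W' : L, W < W' → rk W < rk W')
    (hadd : ∀ W W' : L, rk (W ⊓ W') + rk (W ⊔ W') = rk W + rk W')
    (hsub : ∀ W W' : L, logvol (W ⊓ W') + logvol (W ⊔ W') ≤ logvol W + logvol W')
    (slope : L → L → ℝ)
    (hslope : ∀ A B : L, slope A B = (logvol A - logvol B) / ((rk A : ℝ) - (rk B : ℝ)))
    (c : L → ℝ)
    (hc : ∀ W : L, W ≠ ⊥ → W ≠ ⊤ →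
      c W = sInf {x : ℝ | ∃ W₀ W₂ : L, W₀ < W ∧ W < W₂ ∧ x = slope W₂ W - slope W W₀})
    (V V' : L) (hV : V ≠ ⊥) (hV' : V' ≠ ⊥) (hVt : V ≠ ⊤) (hV't : V' ≠ ⊤)
    (hcV : 0 < c V) (hcV' : 0 < c V') (hrk : rk V = rk V') :
    V = V' := by
  by_contra hne
  have hVV' : ¬V ≤ V' := fun h => hne (StrictMono.eq_of_le_of_apply_eq hmono h hrk)
  have hV'V : ¬V' ≤ V := fun h => hne (StrictMono.eq_of_le_of_apply_eq hmono h hrk.symm).symm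
  have hsum : (rk (V ⊓ V') : ℝ) + rk (V ⊔ V') = 2 * rk V := by
    rw [two_mul]; nth_rewrite 2 [hrk]; exact_mod_cast hadd V V'
  have midpoint_convex : ∀ W, W ≠ ⊥ → W ≠ ⊤ → 0 < c W → V ⊓ V' < W → W < V ⊔ V' →
      rk W = rk V → 2 * logvol W < logvol (V ⊓ V') + logvol (V ⊔ V') := by
    intro W hW hWt hcW hlo hhi hrkW
    have hslopes := slope_lt_slope_of_sInf_pos slope (hc W hW hWt ▸ hcW) hlo hhi
    rw [hslope, hslope] at hslopes
    exact two_mul_lt_add_of_div_lt_div (by exact_mod_cast hmono _ _ hlo) (by rw [hrkW, hsum]) hslopes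
  linarith [midpoint_convex V hV hVt hcV (inf_lt_left.mpr hVV') (left_lt_sup.mpr hV'V) rfl,
    midpoint_convex V' hV' hV't hcV' (inf_lt_right.mpr hV'V) (right_lt_sup.mpr hVV') hrk.symm,
    hsub V V']
end

section
/- Let L be an order-theoretic lattice with a strictly monotone additive rank and subadditive logvol as above. Then the set of elements V ∈ L \ {⊥, ⊤} with c_V > 0 forms a chain: for any two such elements V, W, either V ≤ W or W ≤ V. -/
/-!
If `V` and `W` were incomparable, put `A = V ⊓ W < V, W < B = V ⊔ W`. Positivity of `c V` says
that the slope of `logvol` along `A < V < B` strictly increases at `V`, i.e. the point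
`(rk V, logvol V)` lies strictly below the chord from `A` to `B`; likewise for `W`. Since
`rk V + rk W = rk A + rk B`, adding the two chord inequalities gives
`logvol V + logvol W < logvol A + logvol B`, contradicting subadditivity.
-/

lemma lt_chord_of_slope_lt {x₀ x₁ x₂ y₀ y₁ y₂ : ℝ} (h₀₁ : x₀ < x₁) (h₁₂ : x₁ < x₂)
    (h : (y₁ - y₀) / (x₁ - x₀) < (y₂ - y₁) / (x₂ - x₁)) :
    y₁ * (x₂ - x₀) < y₀ * (x₂ - x₁) + y₂ * (x₁ - x₀) := by
  rw [div_lt_div_iff₀ (sub_pos.2 h₀₁) (sub_pos.2 h₁₂)] at h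
  linarith

section Lattice

variable {L : Type*} [Lattice L] (rk : L → ℕ) (logvol : L → ℝ)

lemma le_or_le_of_slope_lt (hmono : ∀ W W' : L, W < W' → rk W < rk W')
    (hadd : ∀ W W' : L, rk (W ⊓ W') + rk (W ⊔ W') = rk W + rk W')
    (hsub : ∀ W W' : L, logvol (W ⊓ W') + logvol (W ⊔ W') ≤ logvol W + logvol W') {V W : L}
    (hV : (logvol V - logvol (V ⊓ W)) / ((rk V : ℝ) - rk (V ⊓ W)) <
      (logvol (V ⊔ W) - logvol V) / ((rk (V ⊔ W) : ℝ) - rk V))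
    (hW : (logvol W - logvol (V ⊓ W)) / ((rk W : ℝ) - rk (V ⊓ W)) <
      (logvol (V ⊔ W) - logvol W) / ((rk (V ⊔ W) : ℝ) - rk W)) :
    V ≤ W ∨ W ≤ V := by
  by_contra! ⟨hVW, hWV⟩
  have rk_lt {X Y : L} (h : X < Y) : (rk X : ℝ) < rk Y := by exact_mod_cast hmono X Y h
  have chordV := lt_chord_of_slope_lt (rk_lt (inf_lt_left.2 hVW)) (rk_lt (left_lt_sup.2 hWV)) hV
  have chordW := lt_chord_of_slope_lt (rk_lt (inf_lt_right.2 hWV)) (rk_lt (right_lt_sup.2 hVW)) hW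
  have rank_sum : (rk (V ⊓ W) : ℝ) + rk (V ⊔ W) = rk V + rk W := by exact_mod_cast hadd V W
  have width_pos : (0 : ℝ) < rk (V ⊔ W) - rk (V ⊓ W) :=
    sub_pos.2 (rk_lt ((inf_lt_left.2 hVW).trans (left_lt_sup.2 hWV)))
  have sum_lt : (logvol V + logvol W) * (rk (V ⊔ W) - rk (V ⊓ W)) <
      (logvol (V ⊓ W) + logvol (V ⊔ W)) * (rk (V ⊔ W) - rk (V ⊓ W)) := by
    have rk_sup : (rk (V ⊔ W) : ℝ) = rk V + rk W - rk (V ⊓ W) := by linarith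
    rw [rk_sup] at chordV chordW ⊢
    linarith
  exact (hsub V W).not_gt (lt_of_mul_lt_mul_right sum_lt width_pos.le)

end Lattice

/-- In an order-theoretic lattice with strictly monotone additive rank and
subadditive `logvol`, the elements distinct from `⊥` and `⊤` with positive `c`-value form
a chain. -/
theorem canonical_filtration_chain {L : Type*} [Lattice L] [BoundedOrder L]
    (rk : L → ℕ) (logvol : L → ℝ)
    (hmono : ∀ W W' : L, W < W' → rk W < rk W')
    (hadd : ∀ W W' : L, rk (W ⊓ W') + rk (W ⊔ W') = rk W + rk W')
    (hsub : ∀ W W' : L, logvol (W ⊓ W') + logvol (W ⊔ W') ≤ logvol W + logvol W')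
    (slope : L → L → ℝ)
    (hslope : ∀ A B : L, slope A B = (logvol A - logvol B) / ((rk A : ℝ) - (rk B : ℝ)))
    (c : L → ℝ)
    (hc : ∀ W : L, W ≠ ⊥ → W ≠ ⊤ →
      c W = sInf {x : ℝ | ∃ W₀ W₂ : L, W₀ < W ∧ W < W₂ ∧ x = slope W₂ W - slope W W₀})
    (V W : L) (hV : V ≠ ⊥) (hW : W ≠ ⊥) (hVt : V ≠ ⊤) (hWt : W ≠ ⊤)
    (hcV : 0 < c V) (hcW : 0 < c W) :
    V ≤ W ∨ W ≤ V := by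
  have slope_lt {X : L} (hX : X ≠ ⊥) (hXt : X ≠ ⊤) (hcX : 0 < c X) {X₀ X₂ : L} (h₀ : X₀ < X)
      (h₂ : X < X₂) : slope X X₀ < slope X₂ X := by
    rw [hc X hX hXt] at hcX
    have : ¬ slope X₂ X - slope X X₀ ≤ 0 := fun hle ↦
      hcX.not_ge (Real.sInf_nonpos' ⟨_, ⟨X₀, X₂, h₀, h₂, rfl⟩, hle⟩)
    linarith
  by_cases hcomp : V ≤ W ∨ W ≤ V
  · exact hcomp
  push Not at hcomp
  have hV' := slope_lt hV hVt hcV (inf_lt_left.2 hcomp.1) (left_lt_sup.2 hcomp.2)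
  have hW' := slope_lt hW hWt hcW (inf_lt_right.2 hcomp.2) (right_lt_sup.2 hcomp.1)
  rw [hslope, hslope] at hV' hW'
  exact le_or_le_of_slope_lt rk logvol hmono hadd hsub hV' hW'
end

section
/- Let s be an inner product on ℝ^n. For every real number C there are only finitely many direct summands W of ℤ^n with ln vol_W(s) ≤ C. -/
/-!
A direct summand `W` of rank `m` with basis matrix `M` is the `det (M Mᵀ)`-eigenspace of the
integer matrix `Q = Mᵀ adj(M Mᵀ) M`, which is `det (M Mᵀ)` times the orthogonal projection onto
`W ⊗ ℝ`; saturation of `W` is what makes the eigenspace no larger than `W`. Since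
`Q² = det (M Mᵀ) • Q` and `Q` is symmetric, its entries are bounded by `det (M Mᵀ)`, and
`S ≥ c • 1` gives `c ^ m * det (M Mᵀ) ≤ det (M S Mᵀ) = vol_W(S) ^ 2`. So a bound on `vol_W(S)`
leaves only finitely many possible pairs `(det (M Mᵀ), Q)`, each determining `W`.
-/

open Matrix

theorem Submodule.mem_of_smul_mem_of_isCompl {R M : Type*} [Ring R] [AddCommGroup M]
    [Module R M] [Module.IsTorsionFree R M] {p q : Submodule R M} (h : IsCompl p q) {r : R}
    (hr : IsRegular r) {x : M} (hx : r • x ∈ p) : x ∈ p := by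
  obtain ⟨y, hy, z, hz, rfl⟩ := Submodule.mem_sup.1 (h.sup_eq_top ▸ Submodule.mem_top : x ∈ p ⊔ q)
  have hrz : r • z ∈ p ⊓ q :=
    ⟨by simpa [smul_add] using p.sub_mem hx (p.smul_mem r hy), q.smul_mem r hz⟩
  rw [h.inf_eq_bot, Submodule.mem_bot, hr.smul_eq_zero_iff_right] at hrz
  rw [hrz, add_zero]
  exact hy

namespace Matrix

section ScaledRowProj

variable {R : Type*} [CommRing R] {m n : Type*} [Fintype m] [Fintype n] [DecidableEq m]

/-- `det (M * Mᵀ)` times the orthogonal projection onto the row space of `M`; unlike the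
projection itself, it has entries in `R`. -/
def scaledRowProj (M : Matrix m n R) : Matrix n n R := Mᵀ * adjugate (M * Mᵀ) * M

theorem scaledRowProj_mul_transpose (M : Matrix m n R) :
    scaledRowProj M * Mᵀ = (M * Mᵀ).det • Mᵀ := by
  rw [scaledRowProj, Matrix.mul_assoc, Matrix.mul_assoc, adjugate_mul, Matrix.mul_smul,
    Matrix.mul_one]

theorem scaledRowProj_mul_self (M : Matrix m n R) :
    scaledRowProj M * scaledRowProj M = (M * Mᵀ).det • scaledRowProj M :=
  calc scaledRowProj M * scaledRowProj M = scaledRowProj M * Mᵀ * (adjugate (M * Mᵀ) * M) := by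
        simp only [scaledRowProj, Matrix.mul_assoc]
    _ = (M * Mᵀ).det • scaledRowProj M := by
        rw [scaledRowProj_mul_transpose, Matrix.smul_mul, scaledRowProj, Matrix.mul_assoc]

theorem transpose_scaledRowProj (M : Matrix m n R) : (scaledRowProj M)ᵀ = scaledRowProj M := by
  rw [scaledRowProj, transpose_mul, transpose_mul, transpose_transpose, adjugate_transpose,
    transpose_mul, transpose_transpose, Matrix.mul_assoc]

theorem eigenspace_scaledRowProj {M : Matrix m n R} {W' : Submodule R (n → R)}
    (hW : IsCompl (Submodule.span R (Set.range M.row)) W') (hd : IsRegular (M * Mᵀ).det) :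
    Module.End.eigenspace (scaledRowProj M).mulVecLin (M * Mᵀ).det =
      Submodule.span R (Set.range M.row) := by
  ext x
  rw [Module.End.mem_eigenspace_iff, mulVecLin_apply, ← range_vecMulLinear]
  constructor
  · intro hx
    refine Submodule.mem_of_smul_mem_of_isCompl (range_vecMulLinear M ▸ hW) hd
      ⟨(adjugate (M * Mᵀ) * M) *ᵥ x, ?_⟩
    rw [vecMulLinear_apply, ← mulVec_transpose, ← hx, scaledRowProj, mulVec_mulVec,
      Matrix.mul_assoc]
  · rintro ⟨y, rfl⟩
    rw [vecMulLinear_apply, ← mulVec_transpose, mulVec_mulVec, scaledRowProj_mul_transpose,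
      smul_mulVec]

end ScaledRowProj

theorem abs_apply_le_of_mul_self_eq_smul {R n : Type*} [CommRing R] [LinearOrder R]
    [IsStrictOrderedRing R] [Fintype n] {Q : Matrix n n R} {d : R} (hQ : Qᵀ = Q)
    (hQQ : Q * Q = d • Q) (i j : n) : |Q i j| ≤ |d| := by
  have hrow : ∀ k, Q i k ^ 2 ≤ d * Q i i := fun k => by
    have hsymm : ∀ l, Q l i = Q i l := fun l => congrFun (congrFun hQ i) l
    have hdiag := congrFun (congrFun hQQ i) i
    simp_rw [mul_apply, smul_apply, smul_eq_mul, hsymm, ← sq] at hdiag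
    rw [← hdiag]
    exact Finset.single_le_sum (fun l _ => sq_nonneg (Q i l)) (Finset.mem_univ k)
  have hi := hrow i
  have hj := hrow j
  exact sq_le_sq.1 (by nlinarith [sq_nonneg (Q i i - d)])

theorem cast_det_mul_transpose {R m n : Type*} [CommRing R] [Fintype m] [Fintype n]
    [DecidableEq m] (M : Matrix m n ℤ) :
    ((M * Mᵀ).det : R) = (M.map (Int.cast : ℤ → R) * (M.map Int.cast)ᵀ).det := by
  rw [Int.cast_det, ← Int.coe_castRingHom, Matrix.map_mul, transpose_map]
  rfl

theorem det_mul_transpose_pos {m n : Type*} [Fintype m] [Fintype n] [DecidableEq m]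
    {M : Matrix m n ℤ} (hM : LinearIndependent ℤ M.row) : 0 < (M * Mᵀ).det := by
  have hposDef : (M * Mᵀ).PosDef := by
    simpa using PosDef.mul_conjTranspose_self M (vecMul_injective_iff.2 hM)
  have hne : (M * Mᵀ).det ≠ 0 := fun h => by
    obtain ⟨v, hv, hMv⟩ := exists_mulVec_eq_zero_iff.2 h
    simpa [hMv] using hposDef.dotProduct_mulVec_pos hv
  have hnonneg : (0 : ℝ) ≤ ((M * Mᵀ).det : ℤ) := by
    rw [cast_det_mul_transpose, ← conjTranspose_eq_transpose_of_trivial]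
    exact (posSemidef_self_mul_conjTranspose _).det_nonneg
  exact lt_of_le_of_ne (by exact_mod_cast hnonneg) hne.symm

theorem of_dotProduct_mulVec_eq_mul_mul_transpose {R ι κ : Type*} [NonUnitalSemiring R]
    [Fintype ι] (N : Matrix κ ι R) (S : Matrix ι ι R) :
    Matrix.of (fun i j => N i ⬝ᵥ S *ᵥ N j) = N * S * Nᵀ := by
  ext i j
  rw [of_apply, dotProduct_mulVec]
  rfl

section Real

variable {ι : Type*} [Fintype ι] [DecidableEq ι]

theorem one_le_det_one_add {K : Matrix ι ι ℝ} (hK : K.PosSemidef) : 1 ≤ (1 + K).det := by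
  have hH : (1 + K).IsHermitian := isHermitian_one.add hK.1
  rw [hH.det_eq_prod_eigenvalues]
  refine Finset.one_le_prod fun i _ => ?_
  set v := hH.eigenvectorBasis i
  have hv : star ⇑v ⬝ᵥ ⇑v = 1 := by
    rw [dotProduct_comm, ← EuclideanSpace.inner_eq_star_dotProduct, real_inner_self_eq_norm_sq,
      hH.eigenvectorBasis.orthonormal.1 i, one_pow]
  have := hK.re_dotProduct_nonneg v
  rw [RCLike.ofReal_real_eq_id, id_eq, hH.eigenvalues_eq i, add_mulVec, one_mulVec,
    dotProduct_add, hv, map_add, RCLike.one_re]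
  linarith

open scoped MatrixOrder in
theorem PosSemidef.det_le_det_add {A B : Matrix ι ι ℝ} (hA : A.PosSemidef) (hB : B.PosSemidef) :
    A.det ≤ (A + B).det := by
  by_cases h : A.det = 0
  · rw [h]
    exact (hA.add hB).det_nonneg
  have hA' : A.PosDef := hA.posDef_iff_det_ne_zero.2 h
  obtain ⟨U, rfl⟩ := CStarAlgebra.nonneg_iff_eq_star_mul_self.1 hB.nonneg
  rw [star_eq_conjTranspose, det_add_mul _ _ (isUnit_iff_ne_zero.2 h)]
  have hK : (U * A⁻¹ * Uᴴ).PosSemidef := hA'.inv.posSemidef.mul_mul_conjTranspose_same U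
  nlinarith [one_le_det_one_add hK, hA'.det_pos]

open scoped MatrixOrder in
theorem PosDef.exists_pos_le_one_sub_smul_posSemidef {S : Matrix ι ι ℝ} (hS : S.PosDef) :
    ∃ c : ℝ, 0 < c ∧ c ≤ 1 ∧ (S - c • 1).PosSemidef := by
  cases isEmpty_or_nonempty ι
  · exact ⟨1, one_pos, le_rfl, by rw [Subsingleton.elim (S - 1 • 1) 0]; exact .zero⟩
  obtain ⟨c, hc, hcS⟩ := (CFC.exists_pos_algebraMap_le_iff hS.isHermitian.isSelfAdjoint).2
    fun x hx => hS.isStrictlyPositive.spectrum_pos hx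
  refine ⟨min c 1, lt_min hc one_pos, min_le_right _ _, ?_⟩
  have : S - min c 1 • 1 = (S - c • 1) + (c - min c 1) • 1 := by
    rw [sub_smul]; abel
  rw [this]
  exact (le_iff.1 (by simpa [Algebra.algebraMap_eq_smul_one] using hcS)).add
    (PosSemidef.one.smul (sub_nonneg.2 (min_le_left _ _)))

theorem pow_card_mul_det_le_det_mul_mul_transpose {κ : Type*} [Fintype κ] [DecidableEq κ]
    {S : Matrix ι ι ℝ} {c : ℝ} (hc : 0 ≤ c) (hS : (S - c • 1).PosSemidef) (N : Matrix κ ι ℝ) :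
    c ^ Fintype.card κ * (N * Nᵀ).det ≤ (N * S * Nᵀ).det := by
  have hsplit : N * S * Nᵀ = c • (N * Nᵀ) + N * (S - c • 1) * Nᵀ := by
    rw [Matrix.mul_sub, Matrix.sub_mul, Matrix.mul_smul, Matrix.mul_one, Matrix.smul_mul]
    abel
  rw [hsplit, ← det_smul]
  refine PosSemidef.det_le_det_add ((posSemidef_self_mul_conjTranspose N).smul hc) ?_
  simpa using hS.mul_mul_conjTranspose_same N

end Real

theorem cast_det_mul_transpose_le_of_log_sqrt_le {m n : ℕ} (hmn : m ≤ n)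
    {S : Matrix (Fin n) (Fin n) ℝ} {c : ℝ} (hc0 : 0 < c) (hc1 : c ≤ 1)
    (hcS : (S - c • 1).PosSemidef) {M : Matrix (Fin m) (Fin n) ℤ} (hM : LinearIndependent ℤ M.row)
    {C : ℝ}
    (hC : Real.log (Real.sqrt (M.map (Int.cast : ℤ → ℝ) * S * (M.map (Int.cast : ℤ → ℝ))ᵀ).det)
      ≤ C) :
    ((M * Mᵀ).det : ℝ) ≤ Real.exp (2 * C) / c ^ n := by
  set N := M.map (Int.cast : ℤ → ℝ)
  have hd : (0 : ℝ) < (M * Mᵀ).det := by exact_mod_cast det_mul_transpose_pos hM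
  have hlow : c ^ n * (M * Mᵀ).det ≤ (N * S * Nᵀ).det :=
    calc c ^ n * ((M * Mᵀ).det : ℝ) ≤ c ^ Fintype.card (Fin m) * (M * Mᵀ).det := by
          rw [Fintype.card_fin]
          exact mul_le_mul_of_nonneg_right (pow_le_pow_of_le_one hc0.le hc1 hmn) hd.le
      _ ≤ (N * S * Nᵀ).det := by
          rw [cast_det_mul_transpose]
          exact pow_card_mul_det_le_det_mul_mul_transpose hc0.le hcS N
  have hpos : 0 < (N * S * Nᵀ).det := lt_of_lt_of_le (by positivity) hlow
  rw [Real.log_sqrt hpos.le] at hC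
  have hup : (N * S * Nᵀ).det ≤ Real.exp (2 * C) := (Real.log_le_iff_le_exp hpos).1 (by linarith)
  rw [le_div_iff₀ (by positivity)]
  linarith

end Matrix

/-- for any inner product `S` on `ℝ^n` and any real `C`, there are only
finitely many direct summands `W` of `ℤ^n` with `ln vol_W(S) ≤ C`. -/
theorem finitely_many_small_direct_summands {n : ℕ}
    (S : Matrix (Fin n) (Fin n) ℝ) (hS : S.PosDef)
    (vol : Submodule ℤ (Fin n → ℤ) → ℝ)
    (hvol : ∀ (W : Submodule ℤ (Fin n → ℤ)) (m : ℕ) (b : Module.Basis (Fin m) ℤ W),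
      vol W = Real.sqrt (Matrix.det (Matrix.of (fun i j =>
        dotProduct (fun k => ((b i : Fin n → ℤ) k : ℝ))
          (S.mulVec (fun k => ((b j : Fin n → ℤ) k : ℝ)))))))
    (C : ℝ) :
    {W : Submodule ℤ (Fin n → ℤ) |
      (∃ W' : Submodule ℤ (Fin n → ℤ), IsCompl W W') ∧ Real.log (vol W) ≤ C}.Finite := by
  obtain ⟨c, hc0, hc1, hcS⟩ := hS.exists_pos_le_one_sub_smul_posSemidef
  set B : ℤ := ⌈Real.exp (2 * C) / c ^ n⌉
  have hfin : (Set.Icc (-B) B ×ˢ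
      Set.univ.pi fun _ : Fin n => Set.univ.pi fun _ : Fin n => Set.Icc (-B) B).Finite :=
    (Set.finite_Icc _ _).prod (Set.Finite.pi fun _ => Set.Finite.pi fun _ => Set.finite_Icc _ _)
  refine (hfin.image fun p : ℤ × Matrix (Fin n) (Fin n) ℤ =>
    Module.End.eigenspace p.2.mulVecLin p.1).subset ?_
  rintro W ⟨⟨W', hWW'⟩, hlog⟩
  obtain ⟨m, b⟩ := Submodule.basisOfPid (Pi.basisFun ℤ (Fin n)) W
  set M : Matrix (Fin m) (Fin n) ℤ := Matrix.of fun i => (b i : Fin n → ℤ)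
  have hM : LinearIndependent ℤ M.row := b.linearIndependent.map' W.subtype W.ker_subtype
  have hspan : Submodule.span ℤ (Set.range M.row) = W := by
    rw [show M.row = W.subtype ∘ b from rfl, Set.range_comp, Submodule.span_image, b.span_eq,
      Submodule.map_subtype_top]
  have hmn : m ≤ n := by simpa using hM.fintype_card_le_finrank
  have hd := det_mul_transpose_pos hM
  have hvolW :
      vol W = Real.sqrt (M.map (Int.cast : ℤ → ℝ) * S * (M.map (Int.cast : ℤ → ℝ))ᵀ).det := by
    rw [hvol W m b, ← of_dotProduct_mulVec_eq_mul_mul_transpose]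
    rfl
  have hdB : (M * Mᵀ).det ≤ B := by
    have := cast_det_mul_transpose_le_of_log_sqrt_le hmn hc0 hc1 hcS hM (hvolW ▸ hlog)
    exact_mod_cast this.trans (Int.le_ceil _)
  refine ⟨((M * Mᵀ).det, scaledRowProj M), ⟨⟨by linarith, hdB⟩, fun i _ j _ => ?_⟩, ?_⟩
  · exact abs_le.1 ((abs_apply_le_of_mul_self_eq_smul (transpose_scaledRowProj M)
      (scaledRowProj_mul_self M) i j).trans ((abs_of_pos hd).le.trans hdB))
  · show Module.End.eigenspace _ _ = W
    rw [eigenspace_scaledRowProj (hspan ▸ hWW') (IsRegular.of_ne_zero hd.ne'), hspan]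
end

section
/- Let F be a finite field, Z = F[t], Q = F(t), and ν : Q → ℤ ∪ {∞} the valuation ν(p/q) = deg q − deg p with valuation ring R = {x ∈ Q : ν(x) ≥ 0}. Let (V,S) be a volume space (V a finitely generated free Z-module, S an R-lattice in Q ⊗_Z V of the same rank). If W' ⊆ W ⊆ V are Z-submodules of the same rank m and A is a matrix representing the inclusion W' → W with respect to chosen bases, then logvol_{W'}(S) = logvol_W(S) + (−ν(det A)), and moreover −ν(det A) = dim_F(W/W'). -/
set_option synthInstance.maxHeartbeats 1000000
set_option maxHeartbeats 1000000

/-- The valuation ring of the valuation `ν(p/q) = deg q - deg p` on `F(t)`,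
i.e. rational functions of nonpositive `intDegree`. -/
noncomputable def valR (F : Type*) [Field F] : Subring (RatFunc F) where
  carrier := {x | x.intDegree ≤ 0}
  zero_mem' := by simp [Set.mem_setOf_eq, RatFunc.intDegree_zero]
  one_mem' := by simp [Set.mem_setOf_eq, RatFunc.intDegree_one]
  add_mem' := by
    intro a b ha hb
    rcases eq_or_ne b 0 with rfl | hb0
    · simpa using ha
    rcases eq_or_ne (a + b) 0 with h | h
    · simp [Set.mem_setOf_eq, h, RatFunc.intDegree_zero]
    · simp only [Set.mem_setOf_eq] at ha hb ⊢
      exact le_trans (RatFunc.intDegree_add_le hb0 h) (sup_le ha hb)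
  mul_mem' := by
    intro a b ha hb
    rcases eq_or_ne a 0 with rfl | ha0
    · simp [Set.mem_setOf_eq, RatFunc.intDegree_zero]
    rcases eq_or_ne b 0 with rfl | hb0
    · simp [Set.mem_setOf_eq, RatFunc.intDegree_zero]
    · simp only [Set.mem_setOf_eq] at ha hb ⊢
      rw [RatFunc.intDegree_mul ha0 hb0]
      omega
  neg_mem' := by
    intro a ha
    simpa [Set.mem_setOf_eq, RatFunc.intDegree_neg] using ha

/-- `v` is the logarithmic volume of the `F[t]`-submodule `W` with respect to the
lattice basis family `B`: writing a wedge of any basis of `W` in terms of wedges of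
the `B j`, it is the maximum of `-ν` (that is, `intDegree`) of the nonzero minors of
the coefficient matrix. -/
def IsLogVolume (F : Type*) [Field F] {M : Type*} [AddCommGroup M]
    [Module (RatFunc F) M] [Module (Polynomial F) M]
    {ι : Type*} [Fintype ι] [DecidableEq ι] (B : ι → M)
    (W : Submodule (Polynomial F) M) (v : ℝ) : Prop :=
  ∀ (m : ℕ) (b : Module.Basis (Fin m) (Polynomial F) W) (lam : Matrix (Fin m) ι (RatFunc F)),
    (∀ i, (b i : M) = ∑ j, lam i j • B j) →
    v = sSup {x : ℝ | ∃ g : Fin m ↪ ι,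
      (lam.submatrix id ⇑g).det ≠ 0 ∧ x = (((lam.submatrix id ⇑g).det.intDegree : ℤ) : ℝ)}

/-! Let `λ` be the matrix of coordinates of a basis of `W` in the lattice basis. The basis of `W'`
then has coordinates `A λ`, and every maximal minor of `A λ` is `det A` times the corresponding
minor of `λ`. Hence the set of degrees of the nonzero maximal minors is translated by
`deg (det A)`, and so is its supremum: the set is finite, and nonempty because the rows of `λ`
are linearly independent over `F(t)`.

For the second claim, the Smith normal form gives bases of `W` and `W'` in which the inclusion is
`diag (a i)`. Then `det A` is associated to `∏ i, a i`, while `W / W' ≅ ⨁ i, F[t] / (a i)` has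
`F`-dimension `∑ i, deg (a i)`. -/

open Module Polynomial

namespace Matrix

variable {K R κ ι : Type*} [Fintype κ] [DecidableEq κ]

theorem exists_det_submatrix_ne_zero [Fintype ι] [Field K] (M : Matrix κ ι K)
    (h : LinearIndependent K M.row) : ∃ g : κ ↪ ι, (M.submatrix id g).det ≠ 0 := by
  have hspan : Submodule.span K (Set.range M.col) = ⊤ := by
    apply Submodule.eq_top_of_finrank_eq
    rw [← rank_eq_finrank_span_cols, h.rank_matrix, finrank_fintype_fun_eq_card]
  obtain ⟨κ', a, ha, hspan', hli⟩ := exists_linearIndependent' K M.col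
  rw [hspan] at hspan'
  let C : Basis κ' K (κ → K) := Basis.mk hli hspan'.ge
  have : Finite κ' := Finite.of_injective a ha
  let e : κ ≃ κ' := (C.indexEquiv (Pi.basisFun K κ)).symm
  refine ⟨e.toEmbedding.trans ⟨a, ha⟩, fun hdet => ?_⟩
  have hcols : LinearIndependent K (M.submatrix id (e.toEmbedding.trans ⟨a, ha⟩)).col :=
    hli.comp e e.injective
  exact ((isUnit_iff_isUnit_det _).mp (linearIndependent_cols_iff_isUnit.mp hcols)).ne_zero hdet

theorem det_mul_submatrix [CommRing R] (P : Matrix κ κ R) (M : Matrix κ ι R) (g : κ ↪ ι) :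
    ((P * M).submatrix id g).det = P.det * (M.submatrix id g).det :=
  det_mul P (M.submatrix id g)

end Matrix

section MaximalMinors

variable {F ι : Type*} [Field F] {m : ℕ}

def maximalMinorDegrees (lam : Matrix (Fin m) ι (RatFunc F)) : Set ℝ :=
  {x : ℝ | ∃ g : Fin m ↪ ι,
    (lam.submatrix id ⇑g).det ≠ 0 ∧ x = (((lam.submatrix id ⇑g).det.intDegree : ℤ) : ℝ)}

theorem maximalMinorDegrees_finite [Finite ι] (lam : Matrix (Fin m) ι (RatFunc F)) :
    (maximalMinorDegrees lam).Finite :=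
  (Set.finite_range fun g : Fin m ↪ ι => ((lam.submatrix id g).det.intDegree : ℝ)).subset
    fun _ ⟨g, _, hx⟩ => ⟨g, hx.symm⟩

theorem maximalMinorDegrees_nonempty [Fintype ι] {lam : Matrix (Fin m) ι (RatFunc F)}
    (h : LinearIndependent (RatFunc F) lam.row) : (maximalMinorDegrees lam).Nonempty :=
  let ⟨g, hg⟩ := lam.exists_det_submatrix_ne_zero h
  ⟨_, g, hg, rfl⟩

theorem maximalMinorDegrees_mul {P : Matrix (Fin m) (Fin m) (RatFunc F)} (hP : P.det ≠ 0)
    (lam : Matrix (Fin m) ι (RatFunc F)) :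
    maximalMinorDegrees (P * lam) =
      (fun x => (P.det.intDegree : ℝ) + x) '' maximalMinorDegrees lam := by
  ext x
  simp only [maximalMinorDegrees, Matrix.det_mul_submatrix, Set.mem_image, Set.mem_setOf_eq]
  constructor
  · rintro ⟨g, hg, rfl⟩
    have hg' := right_ne_zero_of_mul hg
    exact ⟨_, ⟨g, hg', rfl⟩, by rw [RatFunc.intDegree_mul hP hg']; push_cast; rfl⟩
  · rintro ⟨_, ⟨g, hg, rfl⟩, rfl⟩
    exact ⟨g, mul_ne_zero hP hg, by rw [RatFunc.intDegree_mul hP hg]; push_cast; rfl⟩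

theorem sSup_maximalMinorDegrees_mul [Finite ι] {P : Matrix (Fin m) (Fin m) (RatFunc F)}
    (hP : P.det ≠ 0) {lam : Matrix (Fin m) ι (RatFunc F)}
    (hne : (maximalMinorDegrees lam).Nonempty) :
    sSup (maximalMinorDegrees (P * lam)) = P.det.intDegree + sSup (maximalMinorDegrees lam) := by
  rw [maximalMinorDegrees_mul hP]
  exact ((OrderIso.addLeft _).map_csSup' hne (maximalMinorDegrees_finite lam).bddAbove).symm

end MaximalMinors

section Coordinates

variable {K M ι κ : Type*} [CommRing K] [AddCommGroup M] [Module K M]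

noncomputable def coordinateMatrix (C : Basis ι K M) (v : κ → M) : Matrix κ ι K :=
  Matrix.of fun i j => C.repr (v i) j

theorem eq_sum_coordinateMatrix_smul [Fintype ι] (C : Basis ι K M) (v : κ → M) (i : κ) :
    v i = ∑ j, coordinateMatrix C v i j • C j :=
  (C.sum_repr (v i)).symm

end Coordinates

section LogVolume

variable {F M ι : Type*} [Field F] [AddCommGroup M] [Module (RatFunc F) M] [Module F[X] M]
  [IsScalarTower F[X] (RatFunc F) M] {m : ℕ}

theorem linearIndependent_row_coordinateMatrix [Finite ι] (C : Basis ι (RatFunc F) M)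
    {W : Submodule F[X] M} (bW : Basis (Fin m) F[X] W) :
    LinearIndependent (RatFunc F) (coordinateMatrix C fun i => (bW i : M)).row := by
  have hR : LinearIndependent F[X] fun i => (bW i : M) :=
    bW.linearIndependent.map' W.subtype (Submodule.ker_subtype W)
  exact ((LinearIndependent.iff_fractionRing F[X] (RatFunc F)).mp hR).map' C.equivFun.toLinearMap
    C.equivFun.ker

theorem coordinateMatrix_of_eq_sum (C : Basis ι (RatFunc F) M)
    {W W' : Submodule F[X] M} (bW : Basis (Fin m) F[X] W) (bW' : Basis (Fin m) F[X] W')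
    (A : Matrix (Fin m) (Fin m) F[X])
    (hA : ∀ i, (bW' i : M) = ∑ j, A i j • (bW j : M)) :
    coordinateMatrix C (fun i => (bW' i : M)) =
      A.map (algebraMap F[X] (RatFunc F)) * coordinateMatrix C fun i => (bW i : M) := by
  ext i j
  simp only [coordinateMatrix, Matrix.of_apply, Matrix.mul_apply, Matrix.map_apply, hA,
    ← algebraMap_smul (RatFunc F) (A _ _), map_sum, map_smul, Finsupp.coe_finsetSum,
    Finset.sum_apply, Finsupp.smul_apply, smul_eq_mul]

theorem IsLogVolume.eq_add_intDegree_det [Fintype ι] [DecidableEq ι]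
    (C : Basis ι (RatFunc F) M) {W W' : Submodule F[X] M} (bW : Basis (Fin m) F[X] W)
    (bW' : Basis (Fin m) F[X] W')
    (A : Matrix (Fin m) (Fin m) F[X])
    (hA : ∀ i, (bW' i : M) = ∑ j, A i j • (bW j : M)) {v v' : ℝ}
    (hv : IsLogVolume F C W v) (hv' : IsLogVolume F C W' v') :
    v' = v + (algebraMap F[X] (RatFunc F) A.det).intDegree := by
  have hcoord := coordinateMatrix_of_eq_sum C bW bW' A hA
  obtain ⟨_, g, hg, -⟩ :=
    maximalMinorDegrees_nonempty (linearIndependent_row_coordinateMatrix C bW')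
  rw [hcoord, Matrix.det_mul_submatrix] at hg
  have hdet : (A.map (algebraMap F[X] (RatFunc F))).det ≠ 0 := left_ne_zero_of_mul hg
  rw [hv m bW _ (eq_sum_coordinateMatrix_smul C _),
    hv' m bW' _ (eq_sum_coordinateMatrix_smul C _)]
  change sSup (maximalMinorDegrees _) = sSup (maximalMinorDegrees _) + _
  rw [hcoord, sSup_maximalMinorDegrees_mul hdet (maximalMinorDegrees_nonempty
    (linearIndependent_row_coordinateMatrix C bW)), RingHom.map_det, add_comm]
  rfl

end LogVolume

theorem Module.Basis.det_of_eq_sum {R M ι : Type*} [CommRing R] [AddCommGroup M] [Module R M]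
    [Fintype ι] [DecidableEq ι] (b : Basis ι R M) {v : ι → M} {A : Matrix ι ι R}
    (hA : ∀ i, v i = ∑ j, A i j • b j) : b.det v = A.det := by
  rw [b.det_apply, ← Matrix.det_transpose A]
  congr 1
  ext i j
  rw [b.toMatrix_apply, hA, b.repr_sum_self, Matrix.transpose_apply]

theorem Submodule.natDegree_det_basis_change {F M ι : Type*} [Field F] [AddCommGroup M]
    [Module F[X] M] [Module F M] [IsScalarTower F F[X] M] [Fintype ι] [DecidableEq ι]
    (b : Basis ι F[X] M) (N : Submodule F[X] M) (bN : Basis ι F[X] N) :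
    (b.det ((↑) ∘ bN)).natDegree = finrank F (M ⧸ N) := by
  have h : finrank F[X] N = finrank F[X] M := by
    rw [finrank_eq_card_basis bN, finrank_eq_card_basis b]
  let a := smithNormalFormCoeffs b h
  have ha : ∀ i, a i ≠ 0 := smithNormalFormCoeffs_ne_zero b h
  let b' := smithNormalFormTopBasis b h
  let ab := smithNormalFormBotBasis b h
  have hdiag : b'.det ((↑) ∘ ab) = ∏ i, a i := by
    rw [b'.det_of_eq_sum (A := Matrix.diagonal a), Matrix.det_diagonal]
    intro i
    simp [smithNormalFormBotBasis_def, Matrix.diagonal_apply, ab, a, b']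
  have hassoc : Associated (b.det ((↑) ∘ bN)) (∏ i, a i) := by
    rw [← hdiag]
    change Associated (b.det (N.subtype ∘ bN)) (b'.det (N.subtype ∘ ab))
    rw [Basis.det_comp_basis, Basis.det_comp_basis]
    exact LinearMap.associated_det_comp_equiv _ _ _
  have : ∀ i, Module.Finite F (F[X] ⧸ Ideal.span {a i}) :=
    fun i => (AdjoinRoot.powerBasis (ha i)).finite
  rw [natDegree_eq_of_degree_eq (degree_eq_degree_of_associated hassoc),
    natDegree_prod _ _ fun i _ => ha i, finrank_quotient_eq_sum F b h]
  exact Finset.sum_congr rfl fun i _ => (AdjoinRoot.powerBasis (ha i)).finrank.symm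

theorem logvol_of_finite_index_general (F : Type*) [Field F] (n m : ℕ)
    (S : Submodule (valR F) (Fin n → RatFunc F))
    (B : Module.Basis (Fin n) (valR F) S)
    (hBspan : Submodule.span (RatFunc F)
      (Set.range (fun j => (B j : Fin n → RatFunc F))) = ⊤)
    (W' W : Submodule (Polynomial F) (Fin n → RatFunc F)) (hWW : W' ≤ W)
    (bW : Module.Basis (Fin m) (Polynomial F) W) (bW' : Module.Basis (Fin m) (Polynomial F) W')
    (A : Matrix (Fin m) (Fin m) (Polynomial F))
    (hA : ∀ i, (bW' i : Fin n → RatFunc F) =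
      ∑ j, A i j • (bW j : Fin n → RatFunc F))
    (lW lW' : ℝ)
    (hlW : IsLogVolume F (fun j => (B j : Fin n → RatFunc F)) W lW)
    (hlW' : IsLogVolume F (fun j => (B j : Fin n → RatFunc F)) W' lW') :
    lW' = lW + (((algebraMap (Polynomial F) (RatFunc F) A.det).intDegree : ℤ) : ℝ) ∧
    ((algebraMap (Polynomial F) (RatFunc F) A.det).intDegree : ℤ) =
      (Module.finrank F (↥W ⧸ (Submodule.comap W.subtype W')) : ℤ) := by
  let C : Basis (Fin n) (RatFunc F) (Fin n → RatFunc F) :=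
    basisOfTopLeSpanOfCardEqFinrank _ hBspan.ge (by simp)
  have hC : ⇑C = fun j => (B j : Fin n → RatFunc F) := coe_basisOfTopLeSpanOfCardEqFinrank _ _ _
  rw [← hC] at hlW hlW'
  let bN := bW'.map (Submodule.comapSubtypeEquivOfLe hWW).symm
  have hdet : bW.det ((↑) ∘ bN) = A.det :=
    bW.det_of_eq_sum fun i => Subtype.ext (by simpa [bN] using hA i)
  refine ⟨hlW.eq_add_intDegree_det C bW bW' A hA hlW', ?_⟩
  rw [RatFunc.intDegree_polynomial, ← hdet, Submodule.natDegree_det_basis_change]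

/-- for `Z = F[t]`-submodules `W' ⊆ W` of the same rank `m` inside a volume
space `(V, S)`, with `A` a matrix representing the inclusion `W' → W` in chosen bases,
`logvol_{W'}(S) = logvol_W(S) + (-ν(det A))`, and `-ν(det A) = dim_F (W / W')`. -/
theorem logvol_of_finite_index (F : Type*) [Field F] [Finite F] (n m : ℕ)
    (S : Submodule (valR F) (Fin n → RatFunc F))
    (B : Module.Basis (Fin n) (valR F) S)
    (hBspan : Submodule.span (RatFunc F)
      (Set.range (fun j => (B j : Fin n → RatFunc F))) = ⊤)
    (W' W : Submodule (Polynomial F) (Fin n → RatFunc F)) (hWW : W' ≤ W)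
    (bW : Module.Basis (Fin m) (Polynomial F) W) (bW' : Module.Basis (Fin m) (Polynomial F) W')
    (A : Matrix (Fin m) (Fin m) (Polynomial F))
    (hA : ∀ i, (bW' i : Fin n → RatFunc F) =
      ∑ j, A i j • (bW j : Fin n → RatFunc F))
    (lW lW' : ℝ)
    (hlW : IsLogVolume F (fun j => (B j : Fin n → RatFunc F)) W lW)
    (hlW' : IsLogVolume F (fun j => (B j : Fin n → RatFunc F)) W' lW') :
    lW' = lW + (((algebraMap (Polynomial F) (RatFunc F) A.det).intDegree : ℤ) : ℝ) ∧
    ((algebraMap (Polynomial F) (RatFunc F) A.det).intDegree : ℤ) =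
      (Module.finrank F (↥W ⧸ (Submodule.comap W.subtype W')) : ℤ) :=
  logvol_of_finite_index_general F n m S B hBspan W' W hWW bW bW' A hA lW lW' hlW hlW'
end

section
/- Let (V,S) be a volume space over Z = F[t] with F finite, and C ∈ ℝ. Then there are only finitely many Z-submodules W ⊆ V with logvol_W(res_W(S)) ≤ C. -/
set_option synthInstance.maxHeartbeats 1000000
set_option maxHeartbeats 1000000

/-!
Fix `d ≠ 0` clearing the denominators of the `B`-coordinates of `V₀`. If `W ≤ V₀` has an
`F[t]`-basis `w₁, …, w_m`, the coordinates of `w₁ ∧ ⋯ ∧ w_m` (the maximal minors of the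
coordinate matrix) lie in `d⁻ᵐ F[t]` and, when `logvol W ≤ C`, have degree at most `C`; so they
range over a finite set. These coordinates determine the `F(t)`-span `U` of `W`, so `W` lies in
the rank-`m` lattice `N = U ∩ V₀`; comparing wedges, `W ⊇ p • N` where `p` is the determinant of
the change of basis, which the coordinates determine as well. As `F[t]/(p)` is finite, only
finitely many submodules lie between `p • N` and `N`.
-/

open Module Submodule Set IsLocalization Polynomial
open scoped Matrix

namespace Matrix

variable {R K ι : Type*} [CommRing R] [Field K] {m : ℕ}

theorem adjugate_submatrix_mul_apply [DecidableEq ι] (L : Matrix (Fin m) ι R) (g : Fin m → ι)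
    (i : Fin m) (j : ι) :
    ((L.submatrix id g).adjugate * L) i j = (L.submatrix id (Function.update g i j)).det := by
  have : L.submatrix id (Function.update g i j)
      = (L.submatrix id g).updateCol i fun k => L k j := by
    ext k l
    rcases eq_or_ne l i with rfl | hl
    · simp
    · simp [hl]
  rw [this, ← cramer_apply, cramer_eq_adjugate_mulVec]
  rfl

theorem span_range_mul_le {κ : Type*} (Q : Matrix κ (Fin m) R) (L : Matrix (Fin m) ι R) :
    span R (range (Q * L)) ≤ span R (range L) := by
  refine span_le.2 ?_
  rintro _ ⟨i, rfl⟩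
  have : (Q * L) i = ∑ k, Q i k • L k := by ext j; simp [mul_apply]
  rw [this]
  exact sum_mem fun k _ => smul_mem _ _ (subset_span (mem_range_self k))

/-- The rows of `adjugate (L.submatrix id g₀) * L` are maximal minors of `L`, hence the same
for `L'`; they span the row space of `L` because that minor is invertible. -/
theorem span_range_le_of_det_submatrix_eq {L L' : Matrix (Fin m) ι K}
    (h : ∀ g : Fin m → ι, (L.submatrix id g).det = (L'.submatrix id g).det) {g₀ : Fin m → ι}
    (h₀ : (L.submatrix id g₀).det ≠ 0) : span K (range L) ≤ span K (range L') := by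
  classical
  set S := L.submatrix id g₀
  have hadj : S.adjugate * L = (L'.submatrix id g₀).adjugate * L' := by
    ext i j
    simp only [S, adjugate_submatrix_mul_apply, h]
  have hL : (S.det⁻¹ • S) * (S.adjugate * L) = L := by
    rw [← Matrix.mul_assoc, smul_mul, mul_adjugate, smul_smul, inv_mul_cancel₀ h₀, one_smul,
      Matrix.one_mul]
  calc span K (range L) = span K (range ((S.det⁻¹ • S) * (S.adjugate * L))) := by rw [hL]
    _ ≤ span K (range (S.adjugate * L)) := span_range_mul_le _ _
    _ ≤ span K (range L') := hadj ▸ span_range_mul_le _ _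

theorem exists_det_submatrix_ne_zero_s10 [Fintype ι] {L : Matrix (Fin m) ι K}
    (hL : LinearIndependent K L) : ∃ g : Fin m → ι, (L.submatrix id g).det ≠ 0 := by
  obtain ⟨κ, a, -, hspan, hind⟩ := exists_linearIndependent' K L.col
  have htop : span K (range L.col) = ⊤ := by
    apply eq_top_of_finrank_eq
    rw [← rank_eq_finrank_span_cols, hL.rank_matrix]
    simp
  let e := (Basis.mk hind (by rw [hspan, htop])).indexEquiv (Pi.basisFun K (Fin m))
  refine ⟨a ∘ e.symm, ?_⟩
  have hcols : LinearIndependent K (L.submatrix id (a ∘ e.symm))ᵀ :=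
    hind.comp e.symm e.symm.injective
  exact ((isUnit_iff_isUnit_det _).mp (linearIndependent_cols_iff_isUnit.mp hcols)).ne_zero

theorem injective_of_det_submatrix_ne_zero {L : Matrix (Fin m) ι R} {g : Fin m → ι}
    (h : (L.submatrix id g).det ≠ 0) : Function.Injective g := fun i j hij => by
  by_contra hne
  exact h (det_zero_of_column_eq hne fun k => by simp [hij])

theorem det_smul_mem_span_of_eq_sum_smul {M : Type*} [AddCommGroup M] [Module R M]
    {e w : Fin m → M} {A : Matrix (Fin m) (Fin m) R} (h : ∀ i, w i = ∑ k, A i k • e k)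
    (k : Fin m) : A.det • e k ∈ span R (range w) := by
  have : A.det • e k = ∑ i, A.adjugate k i • w i := by
    simp_rw [h, Finset.smul_sum, smul_smul]
    rw [Finset.sum_comm]
    simp_rw [← Finset.sum_smul, ← mul_apply, adjugate_mul, smul_apply, one_apply, smul_eq_mul,
      mul_ite, mul_one, mul_zero, ite_smul, zero_smul, Finset.sum_ite_eq, Finset.mem_univ, if_true]
  rw [this]
  exact sum_mem fun i _ => smul_mem _ _ (subset_span (mem_range_self i))

end Matrix

namespace Module.Basis

theorem span_range_coe {R M κ : Type*} [Semiring R] [AddCommMonoid M] [Module R M]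
    {N : Submodule R M} (e : Basis κ R N) : span R (range fun k => (e k : M)) = N := by
  rw [show (range fun k => (e k : M)) = N.subtype '' range e from range_comp _ _, span_image,
    e.span_eq, Submodule.map_top, range_subtype]

theorem linearIndependent_coe {R M κ : Type*} (K : Type*) [CommRing R] [Field K] [Algebra R K]
    [IsFractionRing R K] [AddCommGroup M] [Module K M] [Module R M] [IsScalarTower R K M]
    {W : Submodule R M} (w : Basis κ R W) : LinearIndependent K fun i => (w i : M) :=
  (w.linearIndependent.map' _ W.ker_subtype).localization K (nonZeroDivisors R)

variable {K M ι : Type*} [Field K] [AddCommGroup M] [Module K M] {m : ℕ}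

/-- The coordinates of `w 0 ∧ ⋯ ∧ w (m - 1)` in the basis of `⋀ᵐ M` induced by `b`: the maximal
minors of the matrix whose rows are the `b`-coordinates of the `w i`. They are indexed by all
maps `g : Fin m → ι`; the non-injective ones give `0`. -/
noncomputable def wedgeCoord (b : Basis ι K M) (w : Fin m → M) (g : Fin m → ι) : K :=
  ((b.toMatrix w)ᵀ.submatrix id g).det

variable (b : Basis ι K M)

theorem toMatrix_transpose_sum_smul (A : Matrix (Fin m) (Fin m) K) (e : Fin m → M) :
    (b.toMatrix fun i => ∑ k, A i k • e k)ᵀ = A * (b.toMatrix e)ᵀ := by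
  ext i j
  simp [toMatrix_apply, Matrix.mul_apply]

theorem wedgeCoord_sum_smul (A : Matrix (Fin m) (Fin m) K) (e : Fin m → M) (g : Fin m → ι) :
    b.wedgeCoord (fun i => ∑ k, A i k • e k) g = A.det * b.wedgeCoord e g := by
  rw [wedgeCoord, toMatrix_transpose_sum_smul,
    Matrix.submatrix_mul _ _ _ id _ Function.bijective_id, Matrix.submatrix_id_id, Matrix.det_mul,
    wedgeCoord]

theorem toMatrix_transpose_eq_comp [Fintype ι] (w : Fin m → M) :
    (b.toMatrix w)ᵀ = b.equivFun ∘ w := by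
  ext i j
  simp [toMatrix_apply]

theorem span_le_of_wedgeCoord_eq [Fintype ι] {w w' : Fin m → M}
    (h : b.wedgeCoord w = b.wedgeCoord w') {g₀ : Fin m → ι} (h₀ : b.wedgeCoord w g₀ ≠ 0) :
    span K (range w) ≤ span K (range w') := by
  have := Matrix.span_range_le_of_det_submatrix_eq (congrFun h) h₀
  rwa [toMatrix_transpose_eq_comp, toMatrix_transpose_eq_comp, range_comp, range_comp,
    ← LinearEquiv.coe_coe, ← map_span, ← map_span,
    map_le_map_iff_of_injective b.equivFun.injective] at this

theorem exists_wedgeCoord_ne_zero [Fintype ι] {w : Fin m → M} (hw : LinearIndependent K w) :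
    ∃ g, b.wedgeCoord w g ≠ 0 :=
  Matrix.exists_det_submatrix_ne_zero_s10 <| by
    rw [toMatrix_transpose_eq_comp]
    exact hw.map' _ b.equivFun.ker

theorem isInteger_pow_smul_wedgeCoord {R : Type*} [CommRing R] [Algebra R K] {w : Fin m → M}
    {d : R} (hw : ∀ i j, IsInteger R (d • b.repr (w i) j)) (g : Fin m → ι) :
    IsInteger R (d ^ m • b.wedgeCoord w g) := by
  choose A hA using hw
  refine ⟨(Matrix.of A).submatrix id g |>.det, ?_⟩
  have : (algebraMap R K).mapMatrix ((Matrix.of A).submatrix id g)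
      = algebraMap R K d • (b.toMatrix w)ᵀ.submatrix id g := by
    ext i k
    simp [hA, toMatrix_apply, Algebra.smul_def]
  rw [RingHom.map_det, this, Matrix.det_smul, Fintype.card_fin, ← map_pow, ← Algebra.smul_def,
    wedgeCoord]

end Module.Basis

namespace Submodule

theorem FG.finite_Icc_smul {R M : Type*} [CommRing R] [Ring.HasFiniteQuotients R]
    [AddCommGroup M] [Module R M] {N : Submodule R M} (hN : N.FG) {I : Ideal R} (hI : I ≠ ⊥) :
    (Icc (I • N) N).Finite := by
  have := Ring.HasFiniteQuotients.finiteQuotient hI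
  have := Module.Finite.iff_fg.2 hN
  have : Finite (N ⧸ I • (⊤ : Submodule R N)) :=
    (TensorProduct.quotTensorEquivQuotSMul N I).toEquiv.finite_iff.mp
      (Module.finite_of_finite (R ⧸ I))
  have : Finite (Ici (I • ⊤ : Submodule R N)) :=
    (comapMkQRelIso _).toEquiv.finite_iff.mp (Finite.of_injective _ SetLike.coe_injective)
  refine Finite.of_injOn (f := comap N.subtype) (t := Ici (I • ⊤)) ?_ ?_ (toFinite _)
  · rintro W ⟨hIW, -⟩
    rw [mem_Ici, smul_le]
    exact fun r hr n _ => hIW (smul_mem_smul hr n.2)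
  · rintro W ⟨-, hW⟩ W' ⟨-, hW'⟩ h
    simpa [map_comap_subtype, inf_eq_right.2 hW, inf_eq_right.2 hW'] using
      congrArg (Submodule.map N.subtype) h

theorem FG.finite_and_free_of_le {R M : Type*} [CommRing R] [IsDomain R]
    [IsPrincipalIdealRing R] [AddCommGroup M] [Module R M] [Module.IsTorsionFree R M]
    {V W : Submodule R M} (hV : V.FG) (hWV : W ≤ V) : Module.Finite R W ∧ Module.Free R W :=
  have := Module.Finite.iff_fg.2 (hV.of_le hWV)
  ⟨this, Module.free_of_finite_type_torsion_free'⟩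

variable {R K M ι : Type*} [CommRing R] [Field K] [Algebra R K] [AddCommGroup M] [Module K M]
  [Module R M] [IsScalarTower R K M] {m : ℕ}

theorem FG.exists_forall_isInteger_smul_repr [IsFractionRing R K] [Fintype ι]
    {V : Submodule R M} (hV : V.FG) (b : Basis ι K M) :
    ∃ d ∈ nonZeroDivisors R, ∀ x ∈ V, ∀ j, IsInteger R (d • b.repr x j) := by
  obtain ⟨s, rfl⟩ := hV
  obtain ⟨d, hd⟩ := exist_integer_multiples (nonZeroDivisors R) (s ×ˢ Finset.univ)
    fun p : M × ι => b.repr p.1 p.2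
  refine ⟨d, d.2, fun x hx => ?_⟩
  induction hx using span_induction with
  | mem y hy => exact fun j => hd (y, j) (by simpa using hy)
  | zero => simpa using fun _ => isInteger_zero
  | add y z _ _ hy hz => simpa [smul_add] using fun j => isInteger_add (hy j) (hz j)
  | smul r y _ hy =>
    intro j
    rw [← algebraMap_smul K r y, map_smul, Finsupp.smul_apply, smul_comm]
    simpa [Algebra.smul_def] using isInteger_smul (a := r) (hy j)

theorem exists_wedgeCoord_eq_mul_of_le (b : Basis ι K M) {W N : Submodule R M} (hWN : W ≤ N)
    (w : Basis (Fin m) R W) (e : Basis (Fin m) R N) :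
    ∃ p : R, (∀ g, b.wedgeCoord (fun i => (w i : M)) g
      = algebraMap R K p * b.wedgeCoord (fun k => (e k : M)) g) ∧ Ideal.span {p} • N ≤ W := by
  let A : Matrix (Fin m) (Fin m) R := fun i k => e.repr ⟨w i, hWN (w i).2⟩ k
  have hA : ∀ i, (w i : M) = ∑ k, A i k • (e k : M) := fun i => by
    have := congrArg N.subtype (e.sum_repr ⟨w i, hWN (w i).2⟩).symm
    simp only [map_sum, map_smul, subtype_apply] at this
    exact this
  refine ⟨A.det, fun g => ?_, ?_⟩
  · have hK : (fun i => (w i : M)) = fun i => ∑ k, A.map (algebraMap R K) i k • (e k : M) := by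
      simpa [algebraMap_smul] using funext hA
    rw [hK, b.wedgeCoord_sum_smul, RingHom.map_det]
    rfl
  · rw [← e.span_range_coe, span_smul_span, span_le, ← w.span_range_coe]
    rintro _ ⟨_, rfl, _, ⟨k, rfl⟩, rfl⟩
    exact A.det_smul_mem_span_of_eq_sum_smul hA k

variable [IsFractionRing R K]

theorem span_eq_of_wedgeCoord_eq [Fintype ι] (b : Basis ι K M) {W W' : Submodule R M}
    (w : Basis (Fin m) R W) (w' : Basis (Fin m) R W')
    (h : b.wedgeCoord (fun i => (w i : M)) = b.wedgeCoord fun i => (w' i : M)) :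
    span K (W : Set M) = span K (W' : Set M) := by
  obtain ⟨g₀, h₀⟩ := b.exists_wedgeCoord_ne_zero (w.linearIndependent_coe K)
  rw [← w.span_range_coe, ← w'.span_range_coe, span_span_of_tower, span_span_of_tower]
  exact le_antisymm (b.span_le_of_wedgeCoord_eq h h₀) (b.span_le_of_wedgeCoord_eq h.symm (h ▸ h₀))

variable (K) in
theorem finrank_eq_of_le_of_le_span [IsDomain R] {W N : Submodule R M} [Module.Free R N]
    [Module.Finite R N] (w : Basis (Fin m) R W) (hWN : W ≤ N)
    (hN : N ≤ (span K (W : Set M)).restrictScalars R) : finrank R N = m := by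
  have := IsLocalization.flat K (nonZeroDivisors R)
  have := Module.Free.of_basis w
  have := Module.Finite.of_basis w
  have : span K (N : Set M) = span K (W : Set M) := le_antisymm (span_le.2 hN) (span_mono hWN)
  rw [← finrank_span_eq_finrank K N, this, finrank_span_eq_finrank K W, finrank_eq_card_basis w,
    Fintype.card_fin]

theorem FG.finite_setOf_wedgeCoord_eq [IsDomain R] [IsPrincipalIdealRing R]
    [Ring.HasFiniteQuotients R] [Fintype ι] (b : Basis ι K M) {V₀ : Submodule R M}
    (hV₀ : V₀.FG) (c : (Fin m → ι) → K) :
    {W : Submodule R M | W ≤ V₀ ∧ ∃ w : Basis (Fin m) R W,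
      b.wedgeCoord (fun i => (w i : M)) = c}.Finite := by
  have := Module.IsTorsionFree.trans_faithfulSMul R K M
  set S := {W : Submodule R M | W ≤ V₀ ∧ ∃ w : Basis (Fin m) R W,
    b.wedgeCoord (fun i => (w i : M)) = c}
  rcases S.eq_empty_or_nonempty with hS | ⟨W₁, hW₁V, w₁, hw₁⟩
  · exact hS ▸ finite_empty
  obtain ⟨g₀, h₀⟩ := b.exists_wedgeCoord_ne_zero (w₁.linearIndependent_coe K)
  rw [hw₁] at h₀
  let N := (span K (W₁ : Set M)).restrictScalars R ⊓ V₀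
  have hWN : ∀ W ∈ S, W ≤ N := by
    rintro W ⟨hWV, w, hw⟩
    refine le_inf (fun x hx => ?_) hWV
    rw [restrictScalars_mem, ← span_eq_of_wedgeCoord_eq b w w₁ (hw.trans hw₁.symm)]
    exact subset_span hx
  obtain ⟨_, _⟩ := hV₀.finite_and_free_of_le (inf_le_right : N ≤ V₀)
  have hrank := finrank_eq_of_le_of_le_span K w₁ (hWN W₁ ⟨hW₁V, w₁, hw₁⟩) inf_le_left
  let e := (finBasis R N).reindex (finCongr hrank)
  let P := {p : R | algebraMap R K p * b.wedgeCoord (fun k => (e k : M)) g₀ = c g₀}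
  have hP : P.Subsingleton := by
    intro p hp q hq
    have hx : b.wedgeCoord (fun k => (e k : M)) g₀ ≠ 0 := by
      rintro hx
      exact h₀ (by rw [← hp, hx, mul_zero])
    exact IsFractionRing.injective R K (mul_right_cancel₀ hx (hp.trans hq.symm))
  refine (hP.finite.biUnion fun p hp => (hV₀.of_le (inf_le_right : N ≤ V₀)).finite_Icc_smul
    (I := Ideal.span {p}) ?_).subset ?_
  · rw [Ne, Ideal.span_singleton_eq_bot]
    rintro rfl
    exact h₀ (by rw [← hp, map_zero, zero_mul])
  · intro W hW
    obtain ⟨-, w, hw⟩ := id hW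
    obtain ⟨p, hp, hpW⟩ := exists_wedgeCoord_eq_mul_of_le b (hWN W hW) w e
    exact mem_biUnion (show p ∈ P from (hp g₀).symm.trans (congrFun hw g₀)) ⟨hpW, hWN W hW⟩

end Submodule

instance Polynomial.hasFiniteQuotients {F : Type*} [Field F] [Finite F] :
    Ring.HasFiniteQuotients F[X] where
  finiteQuotient {I} hI := by
    obtain ⟨p, rfl⟩ := (IsPrincipalIdealRing.principal I).principal
    have hp : p ≠ 0 := by rintro rfl; simp at hI
    have := (AdjoinRoot.powerBasis hp).finite
    exact Module.finite_of_finite F (M := AdjoinRoot p)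

theorem Polynomial.finite_setOf_natDegree_le {R : Type*} [Semiring R] [Finite R] (n : ℕ) :
    {p : R[X] | p.natDegree ≤ n}.Finite := by
  have : Finite (degreeLT R (n + 1)) := .of_equiv _ (degreeLTEquiv R (n + 1)).toEquiv.symm
  refine (toFinite (degreeLT R (n + 1) : Set R[X])).subset fun p hp => mem_degreeLT.2 ?_
  exact degree_le_natDegree.trans_lt (by exact_mod_cast Nat.lt_succ_of_le hp)

theorem RatFunc.finite_setOf_isInteger_smul {F : Type*} [Field F] [Finite F] {d : F[X]}
    (hd : d ≠ 0) (N : ℤ) :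
    {x : RatFunc F | IsInteger F[X] (d • x) ∧ (x ≠ 0 → x.intDegree ≤ N)}.Finite := by
  refine ((finite_setOf_natDegree_le (N + d.natDegree).toNat).image fun p =>
    algebraMap F[X] (RatFunc F) p / algebraMap F[X] (RatFunc F) d).subset ?_
  rintro x ⟨⟨p, hp⟩, hx⟩
  have hdK : algebraMap F[X] (RatFunc F) d ≠ 0 := RatFunc.algebraMap_ne_zero hd
  rw [Algebra.smul_def] at hp
  refine ⟨p, ?_, by simp only [hp, mul_div_cancel_left₀ _ hdK]⟩
  rcases eq_or_ne x 0 with rfl | hx0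
  · rw [mul_zero, map_eq_zero_iff _ (IsFractionRing.injective _ _)] at hp
    simp [hp]
  · have hdeg := congrArg intDegree hp
    rw [intDegree_polynomial, intDegree_mul hdK hx0, intDegree_polynomial] at hdeg
    have := hx hx0
    show p.natDegree ≤ _
    omega

theorem IsLogVolume.intDegree_le {F M ι : Type*} [Field F] [AddCommGroup M]
    [Module (RatFunc F) M] [Module F[X] M] [Fintype ι] [DecidableEq ι] {B : ι → M}
    {W : Submodule F[X] M} {v : ℝ} (h : IsLogVolume F B W v) {m : ℕ} (w : Basis (Fin m) F[X] W)
    {lam : Matrix (Fin m) ι (RatFunc F)} (hlam : ∀ i, (w i : M) = ∑ j, lam i j • B j)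
    (g : Fin m ↪ ι) (hg : (lam.submatrix id g).det ≠ 0) :
    ((lam.submatrix id g).det.intDegree : ℝ) ≤ v := by
  rw [h m w lam hlam]
  refine le_csSup ?_ ⟨g, hg, rfl⟩
  refine ((finite_range fun g : Fin m ↪ ι =>
    ((lam.submatrix id g).det.intDegree : ℝ)).subset ?_).bddAbove
  rintro _ ⟨g, -, rfl⟩
  exact ⟨g, rfl⟩

/-- in a volume space `(V, S)` over `F[t]` with `F` finite, for every real
`C` there are only finitely many `F[t]`-submodules `W ⊆ V` with `logvol_W(S) ≤ C`. -/
theorem finitely_many_small_submodules (F : Type*) [Field F] [Finite F] (n : ℕ)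
    (S : Submodule (valR F) (Fin n → RatFunc F))
    (B : Module.Basis (Fin n) (valR F) S)
    (hBspan : Submodule.span (RatFunc F)
      (Set.range (fun j => (B j : Fin n → RatFunc F))) = ⊤)
    (V₀ : Submodule (Polynomial F) (Fin n → RatFunc F)) (hfg : V₀.FG)
    (logvol : Submodule (Polynomial F) (Fin n → RatFunc F) → ℝ)
    (hlog : ∀ W : Submodule (Polynomial F) (Fin n → RatFunc F),
      IsLogVolume F (fun j => (B j : Fin n → RatFunc F)) W (logvol W))
    (C : ℝ) :
    {W : Submodule (Polynomial F) (Fin n → RatFunc F) |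
      W ≤ V₀ ∧ logvol W ≤ C}.Finite := by
  have := Module.IsTorsionFree.trans_faithfulSMul F[X] (RatFunc F) (Fin n → RatFunc F)
  let b : Basis (Fin n) (RatFunc F) (Fin n → RatFunc F) :=
    basisOfTopLeSpanOfCardEqFinrank _ hBspan.ge (by simp)
  have hb : ⇑b = fun j => (B j : Fin n → RatFunc F) := coe_basisOfTopLeSpanOfCardEqFinrank _ _ _
  obtain ⟨d, hd, hdV₀⟩ := hfg.exists_forall_isInteger_smul_repr b
  let Φ : ℕ → Set (RatFunc F) := fun m =>
    {x | IsInteger F[X] (d ^ m • x) ∧ (x ≠ 0 → x.intDegree ≤ ⌊C⌋)}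
  have hΦ : ∀ m, (Φ m).Finite := fun m =>
    RatFunc.finite_setOf_isInteger_smul (pow_ne_zero m (nonZeroDivisors.ne_zero hd)) ⌊C⌋
  refine ((finite_Iic n).biUnion fun m _ => (Finite.pi' fun _ : Fin m → Fin n => hΦ m).biUnion
    fun c _ => hfg.finite_setOf_wedgeCoord_eq b c).subset ?_
  rintro W ⟨hWV, hWC⟩
  obtain ⟨_, _⟩ := hfg.finite_and_free_of_le hWV
  let w := finBasis F[X] W
  have hm : finrank F[X] W ≤ n := by
    simpa using (w.linearIndependent_coe (RatFunc F)).fintype_card_le_finrank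
  refine mem_biUnion (mem_Iic.2 hm) (mem_biUnion (fun g => ⟨?_, fun hg => ?_⟩) ⟨hWV, w, rfl⟩)
  · exact b.isInteger_pow_smul_wedgeCoord (fun i j => hdV₀ _ (hWV (w i).2) j) g
  · have hlam : ∀ i, (w i : Fin n → RatFunc F) = ∑ j,
        (b.toMatrix fun i => (w i : Fin n → RatFunc F))ᵀ i j • (B j : Fin n → RatFunc F) :=
      fun i => by
        simpa [Basis.toMatrix_apply, hb] using (b.sum_repr (w i : Fin n → RatFunc F)).symm
    have := (hlog W).intDegree_le w hlam ⟨g, Matrix.injective_of_det_submatrix_ne_zero hg⟩ hg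
    exact Int.le_floor.2 (by exact_mod_cast this.trans hWC)
end

section
/- Every x ∈ ℝ^n can be written uniquely as a convex combination x = Σ_{i=0}^m μᵢ pᵢ with pᵢ ∈ ℤ^n, 0 < μᵢ ≤ 1, Σ μᵢ = 1, such that p₀ < p₁ < … < p_m ≤ p₀ + (1,…,1), where a ≤ b means aᵢ ≤ bᵢ for all i and a < b means a ≤ b and a ≠ b. In particular m ≤ n. -/
/-!
Write `T l = μ_l + … + μ_m` for the tail sums of the coefficients, so that
`1 = T 0 > T 1 > … > T m > T (m + 1) = 0`. Along the chain every coordinate `c` increases exactly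
once, by one, at some index `l`; hence `x c = p₀ c + T l`, i.e. `p₀ = ⌊x⌋`, `fract (x c) = T l`
and `p_i = ⌊x⌋ + [T i ≤ fract x]` coordinatewise. Strictness of the chain forces each
intermediate `T i` to be a fractional part of a coordinate, so the levels `T 0, …, T (m + 1)` are
exactly the decreasing enumeration of the finite set `{0, 1} ∪ {fract (x c)}`. Conversely that
enumeration defines a decomposition; since a finite set has only one decreasing enumeration, the
decomposition is unique, and `m + 2 ≤ n + 2`.
-/

open Finset

section

variable {n m : ℕ}

abbrev ChainCombination (n : ℕ) : Type :=
  Σ m : ℕ, (Fin (m + 1) → (Fin n → ℤ)) × (Fin (m + 1) → ℝ)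

def IsSimplicialDecomposition (x : Fin n → ℝ) (q : ChainCombination n) : Prop :=
  q.1 ≤ n ∧
  (∀ i j : Fin (q.1 + 1), i < j → q.2.1 i < q.2.1 j) ∧
  (∀ i : Fin (q.1 + 1), q.2.1 i ≤ q.2.1 0 + 1) ∧
  (∀ i : Fin (q.1 + 1), 0 < q.2.2 i ∧ q.2.2 i ≤ 1) ∧
  (∑ i : Fin (q.1 + 1), q.2.2 i = 1) ∧
  (x = ∑ i : Fin (q.1 + 1), q.2.2 i • (fun j => ((q.2.1 i j : ℝ))))

theorem Fin.exists_iff_le_castSucc_of_monotone {P : Fin (m + 1) → Prop} (hP : Monotone P) :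
    ∃ l : Fin (m + 2), ∀ k, P k ↔ l ≤ k.castSucc := by
  classical
  by_cases h : ∃ k, P k
  · obtain ⟨k₀, hk₀⟩ := h
    have hne : (univ.filter P).Nonempty := ⟨k₀, by simpa using hk₀⟩
    refine ⟨((univ.filter P).min' hne).castSucc, fun k => ⟨fun hk => ?_, fun hk => ?_⟩⟩
    · exact Fin.castSucc_le_castSucc_iff.2 (min'_le _ _ (by simpa using hk))
    · exact hP (Fin.castSucc_le_castSucc_iff.1 hk) (by simpa using min'_mem _ hne)
  · push Not at h
    exact ⟨Fin.last _, fun k => iff_of_false (h k) (Fin.castSucc_lt_last k).not_ge⟩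

def tailSum (μ : Fin (m + 1) → ℝ) (l : Fin (m + 2)) : ℝ :=
  ∑ k with l ≤ k.castSucc, μ k

theorem tailSum_zero (μ : Fin (m + 1) → ℝ) : tailSum μ 0 = ∑ k, μ k := by
  simp [tailSum]

theorem tailSum_last (μ : Fin (m + 1) → ℝ) : tailSum μ (Fin.last _) = 0 := by
  simp [tailSum]

theorem tailSum_castSucc (μ : Fin (m + 1) → ℝ) (k : Fin (m + 1)) :
    tailSum μ k.castSucc = μ k + tailSum μ k.succ := by
  simp only [tailSum, Fin.castSucc_le_castSucc_iff, Fin.succ_le_castSucc_iff, filter_le_eq_Ici,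
    filter_lt_eq_Ioi]
  exact (add_sum_Ioi_eq_sum_Ici k).symm

theorem tailSum_strictAnti {μ : Fin (m + 1) → ℝ} (hμ : ∀ k, 0 < μ k) : StrictAnti (tailSum μ) :=
  Fin.strictAnti_iff_succ_lt.2 fun k => by rw [tailSum_castSucc]; linarith [hμ k]

theorem tailSum_castSucc_sub_succ (g : Fin (m + 2) → ℝ) (l : Fin (m + 2)) :
    tailSum (fun k => g k.castSucc - g k.succ) l = g l - g (Fin.last _) := by
  induction l using Fin.reverseInduction with
  | last => simp [tailSum_last]
  | cast k ih => rw [tailSum_castSucc, ih]; ring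

theorem sum_mul_add_ite_le_castSucc (μ : Fin (m + 1) → ℝ) (a : ℝ) (l : Fin (m + 2)) :
    ∑ k, μ k * (a + if l ≤ k.castSucc then 1 else 0) = a * ∑ k, μ k + tailSum μ l := by
  simp only [mul_add, mul_ite, mul_one, mul_zero, sum_add_distrib, ← sum_mul, sum_ite,
    sum_const_zero, add_zero, tailSum]
  ring

noncomputable def fractLevels (x : Fin n → ℝ) : Finset ℝ :=
  insert 0 (insert 1 (univ.image fun c => Int.fract (x c)))

theorem zero_mem_fractLevels (x : Fin n → ℝ) : 0 ∈ fractLevels x :=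
  mem_insert_self _ _

theorem one_mem_fractLevels (x : Fin n → ℝ) : 1 ∈ fractLevels x :=
  mem_insert_of_mem (mem_insert_self _ _)

theorem fract_mem_fractLevels (x : Fin n → ℝ) (c : Fin n) : Int.fract (x c) ∈ fractLevels x :=
  mem_insert_of_mem (mem_insert_of_mem (mem_image_of_mem _ (mem_univ c)))

theorem fractLevels_subset_Icc (x : Fin n → ℝ) : (fractLevels x : Set ℝ) ⊆ Set.Icc 0 1 := by
  intro y hy
  simp only [fractLevels, coe_insert, coe_image, coe_univ, Set.image_univ, Set.mem_insert_iff,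
    Set.mem_range] at hy
  rcases hy with rfl | rfl | ⟨c, rfl⟩
  · simp
  · simp
  · exact ⟨Int.fract_nonneg _, (Int.fract_lt_one _).le⟩

theorem two_le_card_fractLevels (x : Fin n → ℝ) : 2 ≤ (fractLevels x).card :=
  one_lt_card.2 ⟨0, zero_mem_fractLevels x, 1, one_mem_fractLevels x, zero_ne_one⟩

theorem card_fractLevels_le (x : Fin n → ℝ) : (fractLevels x).card ≤ n + 2 :=
  calc (fractLevels x).card
      ≤ (univ.image fun c => Int.fract (x c)).card + 2 :=
        (card_insert_le _ _).trans (Nat.succ_le_succ (card_insert_le _ _))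
    _ ≤ n + 2 := by grw [card_image_le, card_univ, Fintype.card_fin]

structure IsLevelEnum (x : Fin n → ℝ) (T : Fin (m + 2) → ℝ) : Prop where
  strictAnti : StrictAnti T
  range_eq : Set.range T = fractLevels x

theorem exists_isLevelEnum (x : Fin n → ℝ) : ∃ m, ∃ T : Fin (m + 2) → ℝ, IsLevelEnum x T := by
  obtain ⟨m, hm⟩ : ∃ m, (fractLevels x).card = m + 2 :=
    ⟨_, (Nat.sub_add_cancel (two_le_card_fractLevels x)).symm⟩
  refine ⟨m, fun i => (fractLevels x).orderEmbOfFin hm i.rev,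
    ⟨(OrderEmbedding.strictMono _).comp_strictAnti Fin.rev_strictAnti, ?_⟩⟩
  rw [← Function.comp_def, Fin.rev_surjective.range_comp, range_orderEmbOfFin]

noncomputable def decompOfLevels (x : Fin n → ℝ) (T : Fin (m + 2) → ℝ) : ChainCombination n :=
  ⟨m, fun i c => ⌊x c⌋ + if T i.castSucc ≤ Int.fract (x c) then 1 else 0,
    fun i => T i.castSucc - T i.succ⟩

namespace IsLevelEnum

variable {x : Fin n → ℝ} {T : Fin (m + 2) → ℝ}

theorem mem_Icc (h : IsLevelEnum x T) (j : Fin (m + 2)) : T j ∈ Set.Icc 0 1 :=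
  fractLevels_subset_Icc x (h.range_eq ▸ ⟨j, rfl⟩)

theorem apply_zero (h : IsLevelEnum x T) : T 0 = 1 := by
  obtain ⟨j, hj⟩ : (1 : ℝ) ∈ Set.range T := h.range_eq ▸ one_mem_fractLevels x
  exact le_antisymm (h.mem_Icc 0).2 (hj ▸ h.strictAnti.antitone (Fin.zero_le j))

theorem apply_last (h : IsLevelEnum x T) : T (Fin.last _) = 0 := by
  obtain ⟨j, hj⟩ : (0 : ℝ) ∈ Set.range T := h.range_eq ▸ zero_mem_fractLevels x
  exact le_antisymm (hj ▸ h.strictAnti.antitone (Fin.le_last j)) (h.mem_Icc _).1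

theorem exists_apply_eq_fract (h : IsLevelEnum x T) (c : Fin n) : ∃ l, T l = Int.fract (x c) :=
  show Int.fract (x c) ∈ Set.range T from h.range_eq ▸ fract_mem_fractLevels x c

theorem exists_fract_eq_apply (h : IsLevelEnum x T) {j : Fin (m + 2)} (h0 : j ≠ 0)
    (hlast : j ≠ Fin.last _) : ∃ c, Int.fract (x c) = T j := by
  have hj : T j ∈ (fractLevels x : Set ℝ) := h.range_eq ▸ ⟨j, rfl⟩
  simp only [fractLevels, coe_insert, coe_image, coe_univ, Set.image_univ, Set.mem_insert_iff,
    Set.mem_range] at hj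
  rcases hj with hj | hj | hj
  · exact absurd (h.apply_last ▸ h.strictAnti (Fin.lt_last_iff_ne_last.2 hlast)) hj.not_gt
  · exact absurd (h.apply_zero ▸ h.strictAnti (Fin.pos_iff_ne_zero.2 h0)) hj.not_lt
  · exact hj

theorem card_eq (h : IsLevelEnum x T) : (fractLevels x).card = m + 2 := by
  have : ((univ.image T : Finset ℝ) : Set ℝ) = fractLevels x := by
    rw [coe_image, coe_univ, Set.image_univ, h.range_eq]
  rw [← coe_inj.1 this, card_image_of_injective _ h.strictAnti.injective, card_univ,
    Fintype.card_fin]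

theorem decompOfLevels_strictMono (h : IsLevelEnum x T) :
    StrictMono (decompOfLevels x T).2.1 := by
  dsimp only [decompOfLevels]
  intro i j hij
  have hT : T j.castSucc < T i.castSucc := h.strictAnti (Fin.castSucc_lt_castSucc_iff.2 hij)
  obtain ⟨c, hc⟩ := h.exists_fract_eq_apply (Fin.castSucc_ne_zero_iff.2 (Fin.ne_zero_of_lt hij))
    (Fin.castSucc_ne_last j)
  refine Pi.lt_def.2 ⟨fun c' => ?_, c, ?_⟩
  · dsimp only
    split_ifs with hi hj <;> first | omega | exact absurd (hT.le.trans hi) hj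
  · simp [hc, hT.not_ge]

theorem isSimplicialDecomposition (h : IsLevelEnum x T) :
    IsSimplicialDecomposition x (decompOfLevels x T) := by
  dsimp only [IsSimplicialDecomposition, decompOfLevels]
  have hsum : ∑ i : Fin (m + 1), (T i.castSucc - T i.succ) = 1 := by
    rw [← tailSum_zero, tailSum_castSucc_sub_succ, h.apply_zero, h.apply_last, sub_zero]
  refine ⟨(Nat.add_le_add_iff_right).1 (h.card_eq ▸ card_fractLevels_le x),
    fun i j => (h.decompOfLevels_strictMono ·), fun i c => ?_, fun i => ⟨?_, ?_⟩, hsum, ?_⟩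
  · simp only [Fin.castSucc_zero, h.apply_zero, Pi.add_apply, Pi.one_apply,
      (Int.fract_lt_one (x c)).not_ge, if_false, add_zero]
    split_ifs <;> omega
  · exact sub_pos.2 (h.strictAnti (Fin.castSucc_lt_succ (i := i)))
  · linarith [(h.mem_Icc i.castSucc).2, (h.mem_Icc i.succ).1]
  · funext c
    obtain ⟨l, hl⟩ := h.exists_apply_eq_fract c
    simp only [Finset.sum_apply, Pi.smul_apply, smul_eq_mul, Int.cast_add, Int.cast_ite,
      Int.cast_one, Int.cast_zero, ← hl, h.strictAnti.le_iff_ge]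
    rw [sum_mul_add_ite_le_castSucc, hsum, tailSum_castSucc_sub_succ, h.apply_last, hl, mul_one,
      sub_zero, Int.floor_add_fract]

theorem decompOfLevels_eq {m' : ℕ} {T' : Fin (m' + 2) → ℝ} (h : IsLevelEnum x T)
    (h' : IsLevelEnum x T') : decompOfLevels x T = decompOfLevels x T' := by
  obtain rfl : m = m' := by have := h.card_eq; have := h'.card_eq; omega
  rw [(h.strictAnti.range_inj h'.strictAnti).1 (h.range_eq.trans h'.range_eq.symm)]

end IsLevelEnum

namespace IsSimplicialDecomposition

variable {x : Fin n → ℝ} {p : Fin (m + 1) → Fin n → ℤ} {μ : Fin (m + 1) → ℝ}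

theorem exists_level (h : IsSimplicialDecomposition x ⟨m, p, μ⟩) (c : Fin n) :
    ∃ l : Fin (m + 2), Int.fract (x c) = tailSum μ l ∧
      ∀ k, p k c = ⌊x c⌋ + if l ≤ k.castSucc then 1 else 0 := by
  obtain ⟨-, hp, hp₁, hμ, hsum, hx⟩ := h
  have hp : StrictMono p := hp
  have hjump : ∀ k, p k c = p 0 c + if p 0 c < p k c then 1 else 0 := by
    intro k
    have h₀ : p 0 c ≤ p k c := hp.monotone (Fin.zero_le k) c
    have h₁ : p k c ≤ p 0 c + 1 := hp₁ k c
    split_ifs <;> omega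
  obtain ⟨l, hl⟩ : ∃ l : Fin (m + 2), ∀ k, p 0 c < p k c ↔ l ≤ k.castSucc :=
    Fin.exists_iff_le_castSucc_of_monotone fun i j hij hi => hi.trans_le (hp.monotone hij c)
  have hl₀ : l ≠ 0 := by
    rintro rfl
    exact lt_irrefl _ ((hl 0).2 (Fin.zero_le _))
  have hT := tailSum_strictAnti fun k => (hμ k).1
  have hpc : ∀ k, p k c = p 0 c + if l ≤ k.castSucc then 1 else 0 := fun k => by
    rw [hjump k, if_congr (hl k) rfl rfl]
  have hxc : x c = p 0 c + tailSum μ l :=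
    calc x c = ∑ k, μ k * (p k c : ℝ) := by simp [hx]
      _ = ∑ k, μ k * ((p 0 c : ℝ) + if l ≤ k.castSucc then 1 else 0) :=
        sum_congr rfl fun k _ => by rw [hpc k]; push_cast; rfl
      _ = p 0 c + tailSum μ l := by rw [sum_mul_add_ite_le_castSucc, hsum, mul_one]
  have hlev : tailSum μ l ∈ Set.Ico 0 1 :=
    ⟨tailSum_last μ ▸ hT.antitone (Fin.le_last l),
      hsum ▸ tailSum_zero μ ▸ hT (Fin.pos_iff_ne_zero.2 hl₀)⟩
  have hfloor : ⌊x c⌋ = p 0 c := by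
    rw [hxc, Int.floor_intCast_add, Int.floor_eq_zero_iff.2 hlev, add_zero]
  exact ⟨l, by rw [hxc, Int.fract_intCast_add, Int.fract_eq_self.2 hlev], hfloor ▸ hpc⟩

theorem isLevelEnum_tailSum (h : IsSimplicialDecomposition x ⟨m, p, μ⟩) :
    IsLevelEnum x (tailSum μ) := by
  have hsum : tailSum μ 0 = 1 := (tailSum_zero μ).trans h.2.2.2.2.1
  refine ⟨tailSum_strictAnti fun k => (h.2.2.2.1 k).1, Set.Subset.antisymm ?_ ?_⟩
  · rintro _ ⟨j, rfl⟩
    rcases Fin.eq_zero_or_eq_succ j with rfl | ⟨j, rfl⟩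
    · exact hsum ▸ one_mem_fractLevels x
    rcases Fin.eq_castSucc_or_eq_last j with ⟨k, rfl⟩ | rfl
    · obtain ⟨c, hc⟩ := (Pi.lt_def.1 (h.2.1 _ _ (Fin.castSucc_lt_succ (i := k)))).2
      replace hc : p k.castSucc c < p k.succ c := hc
      obtain ⟨l, hfract, hl⟩ := h.exists_level c
      have hlk : l = k.castSucc.succ := by
        rw [hl, hl] at hc
        split_ifs at hc with h₁ <;> try omega
        rename_i h₂
        refine Fin.ext ?_
        simp only [Fin.le_def, Fin.val_castSucc, Fin.val_succ] at h₁ h₂ ⊢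
        omega
      rw [← hlk, ← hfract]
      exact fract_mem_fractLevels x c
    · exact Fin.succ_last m ▸ (tailSum_last μ).symm ▸ zero_mem_fractLevels x
  · intro y hy
    simp only [fractLevels, coe_insert, coe_image, coe_univ, Set.image_univ, Set.mem_insert_iff,
      Set.mem_range] at hy
    rcases hy with rfl | rfl | ⟨c, rfl⟩
    · exact ⟨Fin.last _, tailSum_last μ⟩
    · exact ⟨0, hsum⟩
    · obtain ⟨l, hfract, -⟩ := h.exists_level c
      exact ⟨l, hfract.symm⟩

theorem eq_decompOfLevels_tailSum (h : IsSimplicialDecomposition x ⟨m, p, μ⟩) :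
    (⟨m, p, μ⟩ : ChainCombination n) = decompOfLevels x (tailSum μ) := by
  have hT := (h.isLevelEnum_tailSum).strictAnti
  simp only [decompOfLevels, Sigma.mk.injEq, heq_eq_eq, Prod.mk.injEq, true_and]
  refine ⟨funext fun k => funext fun c => ?_, funext fun k => ?_⟩
  · obtain ⟨l, hfract, hl⟩ := h.exists_level c
    simp only [hl, hfract, hT.le_iff_ge]
  · rw [tailSum_castSucc, add_sub_cancel_right]

end IsSimplicialDecomposition

end

/-- every `x ∈ ℝ^n` is uniquely a convex combination of a strictly
increasing chain `p₀ < … < p_m` in `ℤ^n` with `p_m ≤ p₀ + (1,…,1)` and all coefficients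
positive; in particular `m ≤ n`.  (This is the standard triangulation of `ℝ^n`.) -/
theorem unique_simplicial_decomposition (n : ℕ) (x : Fin n → ℝ) :
    ∃! q : Σ m : ℕ, (Fin (m + 1) → (Fin n → ℤ)) × (Fin (m + 1) → ℝ),
      q.1 ≤ n ∧
      (∀ i j : Fin (q.1 + 1), i < j → q.2.1 i < q.2.1 j) ∧
      (∀ i : Fin (q.1 + 1), q.2.1 i ≤ q.2.1 0 + 1) ∧
      (∀ i : Fin (q.1 + 1), 0 < q.2.2 i ∧ q.2.2 i ≤ 1) ∧
      (∑ i : Fin (q.1 + 1), q.2.2 i = 1) ∧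
      (x = ∑ i : Fin (q.1 + 1), q.2.2 i • (fun j => ((q.2.1 i j : ℝ)))) := by
  change ∃! q : ChainCombination n, IsSimplicialDecomposition x q
  obtain ⟨m, T, hT⟩ := exists_isLevelEnum x
  refine ⟨decompOfLevels x T, hT.isSimplicialDecomposition, ?_⟩
  rintro ⟨m', p, μ⟩ h
  rw [h.eq_decompOfLevels_tailSum]
  exact h.isLevelEnum_tailSum.decompOfLevels_eq hT
end

section
/- Let q > 1 and n ≥ 2. For k ∈ {1,…,n−1} define f(k) = ∏_{i=1}^{k} (q^i − 1)/(q − 1) · ∏_{i=1}^{n−k} (q^i − 1)/(q − 1). Then f(k−1)/f(k) = (q^{n−k+1} − 1)/(q^k − 1) > 1 for 2 ≤ k ≤ ⌊n/2⌋, so f is strictly decreasing on {1,…,⌊n/2⌋}; consequently f(k) = f(k') with 1 ≤ k, k' ≤ n−1 implies k' = k or k' = n − k. -/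
/-!
Writing `[m]! = ∏_{i=1}^{m} (q^i − 1)/(q − 1)`, we have `f k = [k]! [n−k]!`. Passing from `k`
to `k − 1` removes the factor `(q^k − 1)/(q − 1)` from the first q-factorial and adds
`(q^{n−k+1} − 1)/(q − 1)` to the second, which gives the ratio; it exceeds `1` because
`k < n − k + 1` when `k ≤ n/2`. Since `f (n − k) = f k`, every value of `f` on `{1, …, n−1}` is
attained at `min k (n − k) ∈ {1, …, ⌊n/2⌋}`, where `f` is injective.
-/

open Finset

section QFactorial

variable {K : Type*} [Field K]

def qFactorial (q : K) (m : ℕ) : K := ∏ i ∈ Icc 1 m, (q ^ i - 1) / (q - 1)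

/-- Over `q = #𝔽`, the number of complete flags in `𝔽ⁿ` through a fixed `k`-dimensional subspace. -/
def flagCount (q : K) (n k : ℕ) : K := qFactorial q k * qFactorial q (n - k)

lemma qFactorial_succ (q : K) (m : ℕ) :
    qFactorial q (m + 1) = qFactorial q m * ((q ^ (m + 1) - 1) / (q - 1)) :=
  prod_Icc_succ_top (Nat.le_add_left 1 m) _

lemma flagCount_sub (q : K) {n k : ℕ} (hk : k ≤ n) :
    flagCount q n (n - k) = flagCount q n k := by
  rw [flagCount, flagCount, Nat.sub_sub_self hk, mul_comm]

variable [LinearOrder K] [IsStrictOrderedRing K]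

lemma pow_sub_one_pos {q : K} (hq : 1 < q) {i : ℕ} (hi : i ≠ 0) : 0 < q ^ i - 1 :=
  sub_pos.mpr (one_lt_pow₀ hq hi)

lemma qFactorial_pos {q : K} (hq : 1 < q) (m : ℕ) : 0 < qFactorial q m :=
  prod_pos fun i hi ↦
    div_pos (pow_sub_one_pos hq (by grind)) (sub_pos.mpr hq)

lemma flagCount_pos {q : K} (hq : 1 < q) (n k : ℕ) : 0 < flagCount q n k :=
  mul_pos (qFactorial_pos hq k) (qFactorial_pos hq (n - k))

lemma flagCount_pred_div {q : K} (hq : 1 < q) {n k : ℕ} (hk : 1 ≤ k) (hkn : k ≤ n) :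
    flagCount q n (k - 1) / flagCount q n k = (q ^ (n - k + 1) - 1) / (q ^ k - 1) := by
  obtain ⟨m, rfl⟩ : ∃ m, k = m + 1 := ⟨k - 1, by omega⟩
  have hnk : n - (m + 1 - 1) = n - (m + 1) + 1 := by omega
  have := qFactorial_pos hq m
  have := qFactorial_pos hq (n - (m + 1))
  have := pow_sub_one_pos hq m.succ_ne_zero
  have := sub_pos.mpr hq
  rw [flagCount, flagCount, hnk, Nat.add_sub_cancel, qFactorial_succ, qFactorial_succ]
  field_simp

lemma one_lt_pow_sub_one_div {q : K} (hq : 1 < q) {a b : ℕ} (ha : a ≠ 0) (hab : a < b) :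
    1 < (q ^ b - 1) / (q ^ a - 1) := by
  rw [one_lt_div (pow_sub_one_pos hq ha)]
  linarith [pow_lt_pow_right₀ hq hab]

lemma one_lt_flagCount_pred_div {q : K} (hq : 1 < q) {n k : ℕ} (hk : 1 ≤ k) (hkn : k ≤ n / 2) :
    1 < flagCount q n (k - 1) / flagCount q n k := by
  rw [flagCount_pred_div hq hk (by omega)]
  exact one_lt_pow_sub_one_div hq (by omega) (by omega)

lemma strictAntiOn_flagCount {q : K} (hq : 1 < q) (n : ℕ) :
    StrictAntiOn (flagCount q n) (Set.Icc 1 (n / 2)) := by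
  refine strictAntiOn_of_succ_lt Set.ordConnected_Icc fun k _ hk hk' ↦ ?_
  rw [Order.succ_eq_add_one] at hk' ⊢
  have h := one_lt_flagCount_pred_div hq (n := n) (k := k + 1) (by omega) hk'.2
  rwa [Nat.add_sub_cancel, one_lt_div (flagCount_pos hq n _)] at h

end QFactorial

lemma eq_or_eq_sub_of_strictAntiOn_of_sub_eq {α : Type*} [Preorder α] {f : ℕ → α} {n : ℕ}
    (hanti : StrictAntiOn f (Set.Icc 1 (n / 2))) (hsub : ∀ k ≤ n, f (n - k) = f k) {k k' : ℕ}
    (hk : k ∈ Set.Icc 1 (n - 1)) (hk' : k' ∈ Set.Icc 1 (n - 1)) (h : f k = f k') :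
    k' = k ∨ k' = n - k := by
  have fold : ∀ j ∈ Set.Icc 1 (n - 1),
      min j (n - j) ∈ Set.Icc 1 (n / 2) ∧ f (min j (n - j)) = f j := by
    rintro j ⟨hj1, hj2⟩
    refine ⟨⟨by omega, by omega⟩, ?_⟩
    rcases le_total j (n - j) with hj | hj
    · rw [min_eq_left hj]
    · rw [min_eq_right hj, hsub j (by omega)]
  obtain ⟨hmk, hfk⟩ := fold k hk
  obtain ⟨hmk', hfk'⟩ := fold k' hk'
  have := hanti.injOn hmk hmk' (by rw [hfk, hfk', h])
  rw [Set.mem_Icc] at hk hk'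
  omega

theorem flag_count_determines_label_general (q : ℝ) (hq : 1 < q) (n : ℕ)
    (f : ℕ → ℝ)
    (hf : ∀ k : ℕ, f k = (∏ i ∈ Finset.Icc 1 k, (q ^ i - 1) / (q - 1)) *
      ∏ i ∈ Finset.Icc 1 (n - k), (q ^ i - 1) / (q - 1)) :
    (∀ k : ℕ, 2 ≤ k → k ≤ n / 2 →
      f (k - 1) / f k = (q ^ (n - k + 1) - 1) / (q ^ k - 1) ∧ 1 < f (k - 1) / f k) ∧
    StrictAntiOn f (Set.Icc 1 (n / 2)) ∧
    (∀ k k' : ℕ, 1 ≤ k → k ≤ n - 1 → 1 ≤ k' → k' ≤ n - 1 →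
      f k = f k' → k' = k ∨ k' = n - k) := by
  obtain rfl : f = flagCount q n := funext hf
  refine ⟨fun k hk hkn ↦ ⟨flagCount_pred_div hq (by omega) (by omega),
    one_lt_flagCount_pred_div hq (by omega) hkn⟩, strictAntiOn_flagCount hq n, ?_⟩
  intro k k' hk hkn hk' hk'n h
  exact eq_or_eq_sub_of_strictAntiOn_of_sub_eq (strictAntiOn_flagCount hq n)
    (fun j hj ↦ flagCount_sub q hj) ⟨hk, hkn⟩ ⟨hk', hk'n⟩ h

/-- for `q > 1` and `n ≥ 2`, the function
`f(k) = ∏_{i=1}^{k} (q^i − 1)/(q − 1) · ∏_{i=1}^{n−k} (q^i − 1)/(q − 1)` satisfies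
`f(k−1)/f(k) = (q^{n−k+1} − 1)/(q^k − 1) > 1` for `2 ≤ k ≤ ⌊n/2⌋`, is strictly
decreasing on `{1, …, ⌊n/2⌋}`, and `f(k) = f(k')` for `1 ≤ k, k' ≤ n−1` forces
`k' = k` or `k' = n − k`. -/
theorem flag_count_determines_label (q : ℝ) (hq : 1 < q) (n : ℕ) (hn : 2 ≤ n)
    (f : ℕ → ℝ)
    (hf : ∀ k : ℕ, f k = (∏ i ∈ Finset.Icc 1 k, (q ^ i - 1) / (q - 1)) *
      ∏ i ∈ Finset.Icc 1 (n - k), (q ^ i - 1) / (q - 1)) :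
    (∀ k : ℕ, 2 ≤ k → k ≤ n / 2 →
      f (k - 1) / f k = (q ^ (n - k + 1) - 1) / (q ^ k - 1) ∧ 1 < f (k - 1) / f k) ∧
    StrictAntiOn f (Set.Icc 1 (n / 2)) ∧
    (∀ k k' : ℕ, 1 ≤ k → k ≤ n - 1 → 1 ≤ k' → k' ≤ n - 1 →
      f k = f k' → k' = k ∨ k' = n - k) :=
  flag_count_determines_label_general q hq n f hf
end

section
/- Let Z be a principal ideal domain (e.g. ℤ or F[t]) with fraction field Q, and let T be a set of primes of Z. Then every matrix A ∈ GL_n(Q) can be written as a product A = B·C with B ∈ GL_n(Z[T^{-1}]) and C ∈ GL_n(Z[(P∖T)^{-1}]), where P is the set of all primes of Z. Moreover, if A ∈ SL_n(Q), then B and C can be chosen in SL_n(Z[T^{-1}]) and SL_n(Z[(P∖T)^{-1}]) respectively. -/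
/-!
Clearing denominators, `d • A` is a matrix over `Z`, and by the Smith normal form it equals
`L * diagonal w * U` with `L, U ∈ GL_n(Z)`. Every nonzero element of `Z` splits as a product of a
factor invertible in `Z[T⁻¹]` and one invertible in `Z[(P ∖ T)⁻¹]`; splitting `d = t * s` and
`w i = a i * b i` gives `A = (L * diagonal (a / t)) * (diagonal (b / s) * U)`.
If `det A = 1`, then `det B` is a unit of both rings, so a diagonal matrix can move it from `B`
to `C`.
-/

theorem IsLocalization.exists_map_eq_smul {R S : Type*} [CommRing R] [CommRing S] [Algebra R S]
    (M : Submonoid R) [IsLocalization M S] {m n : Type*} [Finite m] [Finite n]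
    (A : Matrix m n S) :
    ∃ (d : M) (A' : Matrix m n R), A'.map (algebraMap R S) = algebraMap R S d • A := by
  obtain ⟨d, hd⟩ := exist_integer_multiples_of_finite M fun p : m × n => A p.1 p.2
  choose A' hA' using hd
  refine ⟨d, Matrix.of fun i j => A' (i, j), ?_⟩
  ext i j
  rw [Matrix.map_apply, Matrix.of_apply, hA' (i, j), Algebra.smul_def]
  rfl

theorem UniqueFactorizationMonoid.exists_eq_mul_of_prime_inv_mem {Z K : Type*} [CommRing Z]
    [IsDomain Z] [UniqueFactorizationMonoid Z] [Field K] [Algebra Z K] {S S' : Subring K}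
    (hS : (algebraMap Z K).range ≤ S)
    (hprime : ∀ p : Z, Prime p → (algebraMap Z K p)⁻¹ ∈ S ∨ (algebraMap Z K p)⁻¹ ∈ S')
    {z : Z} (hz : z ≠ 0) :
    ∃ a b : Z, z = a * b ∧ (algebraMap Z K a)⁻¹ ∈ S ∧ (algebraMap Z K b)⁻¹ ∈ S' := by
  induction z using induction_on_prime with
  | h₁ => exact absurd rfl hz
  | h₂ x hx =>
    obtain ⟨u, rfl⟩ := hx
    refine ⟨u, 1, (mul_one _).symm, ?_, by simp⟩
    rw [← map_units_inv]
    exact hS ⟨_, rfl⟩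
  | h₃ x p hx hp ih =>
    obtain ⟨a, b, rfl, ha, hb⟩ := ih hx
    rcases hprime p hp with hpS | hpS'
    · refine ⟨p * a, b, (mul_assoc _ _ _).symm, ?_, hb⟩
      rw [map_mul, mul_inv]
      exact S.mul_mem hpS ha
    · refine ⟨a, p * b, mul_left_comm _ _ _, ha, ?_⟩
      rw [map_mul, mul_inv]
      exact S'.mul_mem hpS' hb

namespace Matrix

theorem exists_eq_mul_diagonal_mul_of_det_ne_zero {R ι : Type*} [CommRing R] [IsDomain R]
    [IsPrincipalIdealRing R] [Fintype ι] [DecidableEq ι] (A : Matrix ι ι R) (hA : A.det ≠ 0) :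
    ∃ (L U : Matrix ι ι R) (w : ι → R),
      IsUnit L.det ∧ IsUnit U.det ∧ (∀ i, w i ≠ 0) ∧ A = L * diagonal w * U := by
  let b := Pi.basisFun R ι
  have hinj : Function.Injective (toLin' A) := by
    refine (injective_iff_map_eq_zero _).mpr fun v hv => ?_
    by_contra hv0
    exact hA (exists_mulVec_eq_zero_iff.mp ⟨v, hv0, hv⟩)
  let e := LinearEquiv.ofInjective (toLin' A) hinj
  obtain ⟨b', w, bN, hbN⟩ :=
    Submodule.exists_smith_normal_form_of_rank_eq b e.finrank_eq.symm
  refine ⟨b.toMatrix b', LinearMap.toMatrix b bN e, w,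
    isUnit_det_of_right_inverse (b.toMatrix_mul_toMatrix_flip b'), e.isUnit_det b bN,
    fun i hi => bN.ne_zero i (Subtype.ext (by simp [hbN, hi])), ?_⟩
  have hsubtype : LinearMap.toMatrix bN b (LinearMap.range (toLin' A)).subtype =
      b.toMatrix b' * diagonal w := by
    ext i j
    simp [LinearMap.toMatrix_apply, Module.Basis.toMatrix_apply, hbN, mul_comm]
  calc A = LinearMap.toMatrix b b ((LinearMap.range (toLin' A)).subtype ∘ₗ e.toLinearMap) := by
        rw [LinearMap.toMatrix_eq_toMatrix']
        exact (LinearMap.toMatrix'_toLin' A).symm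
    _ = b.toMatrix b' * diagonal w * LinearMap.toMatrix b bN e := by
        rw [LinearMap.toMatrix_comp b bN b, hsubtype]

variable {K ι : Type*} [Field K] [Fintype ι] [DecidableEq ι] (S : Subring K)

def MemGL (M : Matrix ι ι K) : Prop :=
  (∀ i j, M i j ∈ S) ∧ M.det ≠ 0 ∧ M.det⁻¹ ∈ S

variable {S}

theorem MemGL.mul {M N : Matrix ι ι K} (hM : MemGL S M) (hN : MemGL S N) : MemGL S (M * N) := by
  obtain ⟨hMS, hM0, hMinv⟩ := hM
  obtain ⟨hNS, hN0, hNinv⟩ := hN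
  refine ⟨fun i j => ?_, ?_, ?_⟩
  · rw [mul_apply]
    exact sum_mem fun k _ => S.mul_mem (hMS i k) (hNS k j)
  · rw [det_mul]
    exact mul_ne_zero hM0 hN0
  · rw [det_mul, mul_inv]
    exact S.mul_mem hMinv hNinv

theorem memGL_diagonal {v : ι → K} (hv : ∀ i, v i ∈ S) (hv0 : ∀ i, v i ≠ 0)
    (hvinv : ∀ i, (v i)⁻¹ ∈ S) : MemGL S (diagonal v) := by
  refine ⟨fun i j => ?_, ?_, ?_⟩
  · rw [diagonal_apply]
    split_ifs
    exacts [hv i, S.zero_mem]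
  · rw [det_diagonal]
    exact Finset.prod_ne_zero_iff.mpr fun i _ => hv0 i
  · rw [det_diagonal, ← Finset.prod_inv_distrib]
    exact prod_mem fun i _ => hvinv i

theorem memGL_map {R : Type*} [CommRing R] {f : R →+* K} (hf : f.range ≤ S) {L : Matrix ι ι R}
    (hL : IsUnit L.det) : MemGL S (L.map f) := by
  obtain ⟨u, hu⟩ := hL
  refine ⟨fun i j => hf ⟨_, rfl⟩, ?_, ?_⟩ <;>
    rw [← RingHom.mapMatrix_apply, ← RingHom.map_det, ← hu]
  · exact (u.isUnit.map f).ne_zero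
  · rw [← map_units_inv]
    exact hf ⟨_, rfl⟩

theorem memGL_diagonal_div {Z : Type*} [CommRing Z] [IsDomain Z] [Algebra Z K]
    [IsFractionRing Z K] (hS : (algebraMap Z K).range ≤ S) {a : ι → Z} {t : Z}
    (ha : ∀ i, a i ≠ 0) (ht : t ≠ 0) (haS : ∀ i, (algebraMap Z K (a i))⁻¹ ∈ S)
    (htS : (algebraMap Z K t)⁻¹ ∈ S) :
    MemGL S (diagonal fun i => algebraMap Z K (a i) / algebraMap Z K t) := by
  have hf0 {z : Z} (hz : z ≠ 0) : algebraMap Z K z ≠ 0 :=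
    (IsFractionRing.to_map_eq_zero_iff).not.mpr hz
  refine memGL_diagonal (fun i => ?_) (fun i => div_ne_zero (hf0 (ha i)) (hf0 ht)) fun i => ?_
  · rw [div_eq_mul_inv]
    exact S.mul_mem (hS ⟨_, rfl⟩) htS
  · rw [inv_div, div_eq_mul_inv]
    exact S.mul_mem (hS ⟨_, rfl⟩) (haS i)

theorem exists_eq_mul_memGL_of_prime_inv_mem {Z : Type*} [CommRing Z] [IsDomain Z]
    [IsPrincipalIdealRing Z] [Algebra Z K] [IsFractionRing Z K] {S S' : Subring K}
    (hS : (algebraMap Z K).range ≤ S) (hS' : (algebraMap Z K).range ≤ S')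
    (hprime : ∀ p : Z, Prime p → (algebraMap Z K p)⁻¹ ∈ S ∨ (algebraMap Z K p)⁻¹ ∈ S')
    (A : Matrix ι ι K) (hA : A.det ≠ 0) :
    ∃ B C : Matrix ι ι K, A = B * C ∧ MemGL S B ∧ MemGL S' C := by
  set f := algebraMap Z K
  obtain ⟨⟨d, hd⟩, A', hA'⟩ := IsLocalization.exists_map_eq_smul (nonZeroDivisors Z) A
  have hd0 : d ≠ 0 := nonZeroDivisors.ne_zero hd
  have hfd0 : f d ≠ 0 := IsFractionRing.to_map_ne_zero_of_mem_nonZeroDivisors hd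
  have hA'det : A'.det ≠ 0 := by
    intro h
    have := congrArg det hA'
    rw [← RingHom.mapMatrix_apply, ← RingHom.map_det, h, map_zero, det_smul] at this
    exact mul_ne_zero (pow_ne_zero _ hfd0) hA this.symm
  obtain ⟨L, U, w, hL, hU, hw, rfl⟩ := exists_eq_mul_diagonal_mul_of_det_ne_zero A' hA'det
  obtain ⟨t, s, rfl, ht, hs⟩ :=
    UniqueFactorizationMonoid.exists_eq_mul_of_prime_inv_mem hS hprime hd0
  choose a b hab ha hb using fun i =>
    UniqueFactorizationMonoid.exists_eq_mul_of_prime_inv_mem hS hprime (hw i)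
  refine ⟨L.map f * diagonal (fun i => f (a i) / f t), diagonal (fun i => f (b i) / f s) * U.map f,
    ?_, (memGL_map hS hL).mul (memGL_diagonal_div hS ?_ ?_ ha ht),
    (memGL_diagonal_div hS' ?_ ?_ hb hs).mul (memGL_map hS' hU)⟩
  · have hdiag : (f (t * s))⁻¹ • (diagonal w).map f =
        diagonal (fun i => f (a i) / f t) * diagonal (fun i => f (b i) / f s) := by
      rw [diagonal_mul_diagonal, diagonal_map (map_zero f), ← diagonal_smul]
      congr 1
      ext i
      simp only [map_mul, _root_.mul_inv_rev, hab, Pi.smul_apply, smul_eq_mul, div_eq_inv_mul]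
      ring
    calc A = (f (t * s))⁻¹ • (L * diagonal w * U).map f := by
          rw [hA', smul_smul, inv_mul_cancel₀ hfd0, one_smul]
      _ = L.map f * ((f (t * s))⁻¹ • (diagonal w).map f) * U.map f := by
          rw [Matrix.mul_smul, Matrix.smul_mul, Matrix.map_mul, Matrix.map_mul]
      _ = _ := by
          rw [hdiag]
          simp only [Matrix.mul_assoc]
  · exact fun i => left_ne_zero_of_mul (hab i ▸ hw i)
  · exact left_ne_zero_of_mul hd0
  · exact fun i => right_ne_zero_of_mul (hab i ▸ hw i)
  · exact right_ne_zero_of_mul hd0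

theorem MemGL.exists_det_eq_one_of_mul {S' : Subring K} {B C : Matrix ι ι K} (hB : MemGL S B)
    (hC : MemGL S' C) (hBC : (B * C).det = 1) :
    ∃ B' C' : Matrix ι ι K, B * C = B' * C' ∧
      (∀ i j, B' i j ∈ S) ∧ B'.det = 1 ∧ (∀ i j, C' i j ∈ S') ∧ C'.det = 1 := by
  rcases isEmpty_or_nonempty ι with hι | ⟨⟨i⟩⟩
  · exact ⟨B, C, rfl, hB.1, det_isEmpty, hC.1, det_isEmpty⟩
  set δ := B.det
  have hδ0 : δ ≠ 0 := hB.2.1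
  have hCdet : C.det = δ⁻¹ := eq_inv_of_mul_eq_one_right (det_mul B C ▸ hBC)
  have hsingle : ∀ {T : Subring K} {x : K}, x ∈ T → ∀ j, (Pi.mulSingle i x : ι → K) j ∈ T := by
    intro T x hx j
    rcases eq_or_ne j i with rfl | hj <;> simp [*]
  refine ⟨B * diagonal (Pi.mulSingle i δ⁻¹), diagonal (Pi.mulSingle i δ) * C, ?_,
    fun j k => ?_, ?_, fun j k => ?_, ?_⟩
  · have hunit : diagonal (Pi.mulSingle i δ⁻¹) * diagonal (Pi.mulSingle i δ) = 1 := by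
      rw [diagonal_mul_diagonal, ← diagonal_one]
      congr 1
      ext j
      rcases eq_or_ne j i with rfl | hj <;> simp [*]
    rw [Matrix.mul_assoc, ← Matrix.mul_assoc (diagonal _), hunit, Matrix.one_mul]
  · rw [mul_diagonal]
    exact S.mul_mem (hB.1 j k) (hsingle hB.2.2 k)
  · simp [det_mul, δ, hδ0]
  · rw [diagonal_mul]
    refine S'.mul_mem (hsingle ?_ j) (hC.1 j k)
    simpa [hCdet] using hC.2.2
  · simp [det_mul, hCdet, hδ0]

end Matrix

theorem GL_factorization_general {Z : Type*} [CommRing Z] [IsDomain Z] [IsPrincipalIdealRing Z]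
    {Q : Type*} [Field Q] [Algebra Z Q] [IsFractionRing Z Q]
    (T : Set Z) (n : ℕ)
    (ZT ZT' : Subring Q)
    (hZT : ZT = Subring.closure (Set.range (algebraMap Z Q) ∪
      {x : Q | ∃ p ∈ T, (algebraMap Z Q p) * x = 1}))
    (hZT' : ZT' = Subring.closure (Set.range (algebraMap Z Q) ∪
      {x : Q | ∃ p : Z, Prime p ∧ p ∉ T ∧ (algebraMap Z Q p) * x = 1}))
    (A : Matrix (Fin n) (Fin n) Q) (hA : IsUnit A.det) :
    (∃ B C : Matrix (Fin n) (Fin n) Q, A = B * C ∧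
      (∀ i j, B i j ∈ ZT) ∧ B.det ≠ 0 ∧ B.det⁻¹ ∈ ZT ∧
      (∀ i j, C i j ∈ ZT') ∧ C.det ≠ 0 ∧ C.det⁻¹ ∈ ZT') ∧
    (A.det = 1 → ∃ B C : Matrix (Fin n) (Fin n) Q, A = B * C ∧
      (∀ i j, B i j ∈ ZT) ∧ B.det = 1 ∧ (∀ i j, C i j ∈ ZT') ∧ C.det = 1) := by
  have hZ {X : Set Q} :
      (algebraMap Z Q).range ≤ Subring.closure (Set.range (algebraMap Z Q) ∪ X) :=
    fun _ hx => Subring.subset_closure (.inl hx)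
  have hprime (p : Z) (hp : Prime p) :
      (algebraMap Z Q p)⁻¹ ∈ ZT ∨ (algebraMap Z Q p)⁻¹ ∈ ZT' := by
    have hinv : algebraMap Z Q p * (algebraMap Z Q p)⁻¹ = 1 :=
      mul_inv_cancel₀ ((IsFractionRing.to_map_eq_zero_iff).not.mpr hp.ne_zero)
    subst hZT hZT'
    by_cases hpT : p ∈ T
    · exact .inl (Subring.subset_closure (.inr ⟨p, hpT, hinv⟩))
    · exact .inr (Subring.subset_closure (.inr ⟨p, hp, hpT, hinv⟩))
  obtain ⟨B, C, rfl, hB, hC⟩ := Matrix.exists_eq_mul_memGL_of_prime_inv_mem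
    (hZT ▸ hZ) (hZT' ▸ hZ) hprime A hA.ne_zero
  exact ⟨⟨B, C, rfl, hB.1, hB.2.1, hB.2.2, hC.1, hC.2.1, hC.2.2⟩,
    hB.exists_det_eq_one_of_mul hC⟩

/-- for a PID `Z` with fraction field `Q` and a set `T` of primes of `Z`,
every `A ∈ GL_n(Q)` factors as `A = B · C` with `B ∈ GL_n(Z[T⁻¹])` and
`C ∈ GL_n(Z[(P∖T)⁻¹])`; if `det A = 1`, then `B, C` can be chosen with determinant `1`.
Here `Z[T⁻¹]` is realized as the subring of `Q` generated by `Z` together with the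
inverses of the primes in `T`, and similarly for the complementary set of primes. -/
theorem GL_factorization {Z : Type*} [CommRing Z] [IsDomain Z] [IsPrincipalIdealRing Z]
    {Q : Type*} [Field Q] [Algebra Z Q] [IsFractionRing Z Q]
    (T : Set Z) (hT : ∀ p ∈ T, Prime p) (n : ℕ)
    (ZT ZT' : Subring Q)
    (hZT : ZT = Subring.closure (Set.range (algebraMap Z Q) ∪
      {x : Q | ∃ p ∈ T, (algebraMap Z Q p) * x = 1}))
    (hZT' : ZT' = Subring.closure (Set.range (algebraMap Z Q) ∪
      {x : Q | ∃ p : Z, Prime p ∧ p ∉ T ∧ (algebraMap Z Q p) * x = 1}))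
    (A : Matrix (Fin n) (Fin n) Q) (hA : IsUnit A.det) :
    (∃ B C : Matrix (Fin n) (Fin n) Q, A = B * C ∧
      (∀ i j, B i j ∈ ZT) ∧ B.det ≠ 0 ∧ B.det⁻¹ ∈ ZT ∧
      (∀ i j, C i j ∈ ZT') ∧ C.det ≠ 0 ∧ C.det⁻¹ ∈ ZT') ∧
    (A.det = 1 → ∃ B C : Matrix (Fin n) (Fin n) Q, A = B * C ∧
      (∀ i j, B i j ∈ ZT) ∧ B.det = 1 ∧ (∀ i j, C i j ∈ ZT') ∧ C.det = 1) :=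
  GL_factorization_general T n ZT ZT' hZT hZT' A hA
end
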